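/- arXiv:2408.14092 — 6 statements merged into one kernel-verified Lean document; each statement's English description precedes it below -/
import Mathlib

section
/- Let n ≥ 0 and let E, F be disjoint nonempty compact subsets of ℂ. Suppose r* = p/q is a rational function of degree at most n with q nonvanishing on E ∪ F, min_{z∈F} |r*(z)| = 1, and sup_{z∈E} |r*(z)| = σ_n, where 0 < σ_n < 1 (so r* solves Problem Z3). Define r̂(z) = ((1−σ_n)/(1+σ_n)) · (r*(z) − √σ_n)/(r*(z) + √σ_n). Then r*(z) + √σ_n ≠ 0 for every z ∈ E ∪ F, r̂ is a rational function of degree at most n, and sup_{z∈E∪F} |r̂(z) − sign_{E/F}(z)| = 2√σ_n/(1+σ_n) = τ_n; that is, r̂ solves Problem Z4. -/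
/-!
Write `a = √σ`, `λ = (1 - a²)/(1 + a²)` and `T = 2a/(1 + a²)`. The Möbius map
`w ↦ u = λ (w - a)/(w + a)` sends the disc `|w| ≤ a²` onto the disc `|u + 1| ≤ T` and the
exterior `|w| ≥ 1` onto the disc `|u - 1| ≤ T`, the unit circle going to `|u - 1| = T`; in
homogeneous coordinates `w = P/Q` both facts are polynomial identities in `P` and `Q`.
So `r̂`, the image of `r*`, has sign error at most `T`, attained where `|r*| = 1`. Conversely, the
inverse map sends a rational function of degree `n` with sign error `< T` to one of modulus
`≥ 1` on `F` whose maximum modulus on the compact set `E` is `< a² = σ`, contradicting the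
minimality of `σ`. Hence `τ_n = T`.
-/

open Polynomial Set

/-- The minimal value `σ_n(E,F)` of the third Zolotarev problem (the ratio problem):
the infimum of `sup_{z ∈ E} |p(z)/q(z)|` over all pairs of complex polynomials `p, q`
of degree at most `n` such that `q` has no zeros in `E` and `|p(z)| ≥ |q(z)|` on `F`. -/
noncomputable def zoloSigma (n : ℕ) (E F : Set ℂ) : ℝ :=
  sInf {s : ℝ | ∃ p q : Polynomial ℂ, p.degree ≤ n ∧ q.degree ≤ n ∧
    (∀ z ∈ E, q.eval z ≠ 0) ∧ (∀ z ∈ F, ‖q.eval z‖ ≤ ‖p.eval z‖) ∧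
    s = sSup ((fun z => ‖p.eval z / q.eval z‖) '' E)}

open scoped Classical in
/-- The sign function relative to `E` and `F`: equal to `-1` on `E` and `+1` elsewhere
(in particular `+1` on `F`). -/
noncomputable def signEF (E : Set ℂ) (z : ℂ) : ℂ := if z ∈ E then -1 else 1

/-- The minimal value `τ_n(E,F)` of the fourth Zolotarev problem (the sign problem). -/
noncomputable def zoloTau (n : ℕ) (E F : Set ℂ) : ℝ :=
  sInf {t : ℝ | ∃ p q : Polynomial ℂ, p.degree ≤ n ∧ q.degree ≤ n ∧
    (∀ z ∈ E ∪ F, q.eval z ≠ 0) ∧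
    t = sSup ((fun z => ‖p.eval z / q.eval z - signEF E z‖) '' (E ∪ F))}

theorem Complex.sq_norm_eq_re_im (w : ℂ) : ‖w‖ ^ 2 = w.re ^ 2 + w.im ^ 2 := by
  rw [Complex.sq_norm, Complex.normSq_apply]; ring

theorem Complex.add_ofReal_ne_zero_of_norm_ne {w : ℂ} {a : ℝ} (h : ‖w‖ ≠ |a|) :
    w + a ≠ 0 := by
  intro h0
  rw [eq_neg_of_add_eq_zero_left h0, norm_neg, Complex.norm_real, Real.norm_eq_abs] at h
  exact h rfl

namespace Zolotarev

theorem signEF_of_mem {E : Set ℂ} {z : ℂ} (hz : z ∈ E) : signEF E z = -1 := by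
  simp [signEF, hz]

theorem signEF_of_notMem {E : Set ℂ} {z : ℂ} (hz : z ∉ E) : signEF E z = 1 := by
  simp [signEF, hz]

theorem norm_signEF (E : Set ℂ) (z : ℂ) : ‖signEF E z‖ = 1 := by
  unfold signEF; split <;> simp

theorem continuousOn_eval_div {S : Set ℂ} (p : ℂ[X]) {q : ℂ[X]}
    (hq : ∀ z ∈ S, q.eval z ≠ 0) :
    ContinuousOn (fun z => p.eval z / q.eval z) S :=
  p.continuousOn.div q.continuousOn hq

theorem bddAbove_norm_div_sub_signEF {E F : Set ℂ} (hE : IsCompact E) (hF : IsCompact F)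
    {p q : ℂ[X]} (hq : ∀ z ∈ E ∪ F, q.eval z ≠ 0) :
    BddAbove ((fun z => ‖p.eval z / q.eval z - signEF E z‖) '' (E ∪ F)) := by
  obtain ⟨M, hM⟩ := (hE.union hF).bddAbove_image (continuousOn_eval_div p hq).norm
  refine ⟨M + 1, ?_⟩
  rintro _ ⟨z, hz, rfl⟩
  calc ‖p.eval z / q.eval z - signEF E z‖
      ≤ ‖p.eval z / q.eval z‖ + ‖signEF E z‖ := norm_sub_le _ _
    _ ≤ M + 1 := by rw [norm_signEF]; linarith [hM ⟨z, hz, rfl⟩]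

theorem zoloSigma_le {n : ℕ} {E F : Set ℂ} {p q : ℂ[X]} (hp : p.degree ≤ n)
    (hq : q.degree ≤ n) (hqE : ∀ z ∈ E, q.eval z ≠ 0)
    (hpqF : ∀ z ∈ F, ‖q.eval z‖ ≤ ‖p.eval z‖) :
    zoloSigma n E F ≤ sSup ((fun z => ‖p.eval z / q.eval z‖) '' E) := by
  refine csInf_le ⟨0, ?_⟩ ⟨p, q, hp, hq, hqE, hpqF, rfl⟩
  rintro _ ⟨p, q, -, -, -, -, rfl⟩
  exact Real.sSup_nonneg (by rintro _ ⟨z, -, rfl⟩; exact norm_nonneg _)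

theorem zoloTau_eq {n : ℕ} {E F : Set ℂ} {T : ℝ}
    (hmem : ∃ p q : ℂ[X], p.degree ≤ n ∧ q.degree ≤ n ∧ (∀ z ∈ E ∪ F, q.eval z ≠ 0) ∧
      T = sSup ((fun z => ‖p.eval z / q.eval z - signEF E z‖) '' (E ∪ F)))
    (hle : ∀ p q : ℂ[X], p.degree ≤ n → q.degree ≤ n → (∀ z ∈ E ∪ F, q.eval z ≠ 0) →
      T ≤ sSup ((fun z => ‖p.eval z / q.eval z - signEF E z‖) '' (E ∪ F))) :
    zoloTau n E F = T :=
  IsLeast.csInf_eq ⟨hmem, by rintro _ ⟨p, q, hp, hq, hq0, rfl⟩; exact hle p q hp hq hq0⟩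

theorem exists_ratio_eq_mobius {n : ℕ} {S : Set ℂ} {p q : ℂ[X]} (hp : p.degree ≤ n)
    (hq : q.degree ≤ n) (hq0 : ∀ z ∈ S, q.eval z ≠ 0) (c a : ℂ)
    (ha : ∀ z ∈ S, p.eval z / q.eval z + a ≠ 0) :
    ∃ p' q' : ℂ[X], p'.degree ≤ n ∧ q'.degree ≤ n ∧ (∀ z ∈ S, q'.eval z ≠ 0) ∧
      ∀ z ∈ S, c * (p.eval z / q.eval z - a) / (p.eval z / q.eval z + a)
        = p'.eval z / q'.eval z := by
  rw [← mem_degreeLE] at hp hq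
  have heval : ∀ z ∈ S, (p + a • q).eval z = q.eval z * (p.eval z / q.eval z + a) := by
    intro z hz
    simp only [eval_add, eval_smul, smul_eq_mul]
    field_simp [hq0 z hz]
  refine ⟨c • (p - a • q), p + a • q,
    mem_degreeLE.1 (Submodule.smul_mem _ _ (sub_mem hp (Submodule.smul_mem _ _ hq))),
    mem_degreeLE.1 (add_mem hp (Submodule.smul_mem _ _ hq)),
    fun z hz => by rw [heval z hz]; exact mul_ne_zero (hq0 z hz) (ha z hz), fun z hz => ?_⟩
  simp only [eval_smul, eval_sub, eval_add, smul_eq_mul]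
  field_simp [hq0 z hz, ha z hz]

theorem normSq_mobius_add_one (a : ℝ) (P Q : ℂ) :
    (2 * a / (1 + a ^ 2)) ^ 2 * ‖P + a * Q‖ ^ 2
      - ‖((1 - a ^ 2) / (1 + a ^ 2) : ℝ) * (P - a * Q) + (P + a * Q)‖ ^ 2
      = 4 * (1 - a ^ 2) / (1 + a ^ 2) ^ 2 * (a ^ 4 * ‖Q‖ ^ 2 - ‖P‖ ^ 2) := by
  have : 1 + a ^ 2 ≠ 0 := by positivity
  simp only [Complex.sq_norm_eq_re_im, Complex.add_re, Complex.add_im, Complex.sub_re,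
    Complex.sub_im, Complex.mul_re, Complex.mul_im, Complex.ofReal_re, Complex.ofReal_im]
  field_simp
  ring

theorem normSq_mobius_sub_one (a : ℝ) (P Q : ℂ) :
    (2 * a / (1 + a ^ 2)) ^ 2 * ‖P + a * Q‖ ^ 2
      - ‖((1 - a ^ 2) / (1 + a ^ 2) : ℝ) * (P - a * Q) - (P + a * Q)‖ ^ 2
      = 4 * (1 - a ^ 2) / (1 + a ^ 2) ^ 2 * a ^ 2 * (‖P‖ ^ 2 - ‖Q‖ ^ 2) := by
  have : 1 + a ^ 2 ≠ 0 := by positivity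
  simp only [Complex.sq_norm_eq_re_im, Complex.add_re, Complex.add_im, Complex.sub_re,
    Complex.sub_im, Complex.mul_re, Complex.mul_im, Complex.ofReal_re, Complex.ofReal_im]
  field_simp
  ring

section Mobius

variable {a : ℝ}

theorem norm_mobius_add_one_le (ha0 : 0 < a) (ha1 : a < 1) {w : ℂ} (hw : ‖w‖ ≤ a ^ 2) :
    ‖((1 - a ^ 2) / (1 + a ^ 2) : ℝ) * (w - a) / (w + a) + 1‖ ≤ 2 * a / (1 + a ^ 2) := by
  have hwa : w + a ≠ 0 :=
    Complex.add_ofReal_ne_zero_of_norm_ne (by rw [abs_of_pos ha0]; nlinarith)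
  have h := normSq_mobius_add_one a w 1
  simp only [mul_one, norm_one, one_pow] at h
  have hc : 0 ≤ 4 * (1 - a ^ 2) / (1 + a ^ 2) ^ 2 := by
    apply div_nonneg <;> nlinarith
  have hw2 : ‖w‖ ^ 2 ≤ a ^ 4 := by nlinarith [norm_nonneg w]
  rw [div_add_one hwa, norm_div, div_le_iff₀ (norm_pos_iff.2 hwa),
    ← pow_le_pow_iff_left₀ (norm_nonneg _) (by positivity) two_ne_zero]
  nlinarith [mul_nonneg hc (sub_nonneg.2 hw2)]

theorem norm_mobius_sub_one_le (ha0 : 0 < a) (ha1 : a < 1) {w : ℂ} (hw : 1 ≤ ‖w‖) :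
    ‖((1 - a ^ 2) / (1 + a ^ 2) : ℝ) * (w - a) / (w + a) - 1‖ ≤ 2 * a / (1 + a ^ 2) := by
  have hwa : w + a ≠ 0 :=
    Complex.add_ofReal_ne_zero_of_norm_ne (by rw [abs_of_pos ha0]; linarith)
  have h := normSq_mobius_sub_one a w 1
  simp only [mul_one, norm_one, one_pow] at h
  have hc : 0 ≤ 4 * (1 - a ^ 2) / (1 + a ^ 2) ^ 2 * a ^ 2 := by
    apply mul_nonneg (div_nonneg _ _) <;> nlinarith
  have hw2 : 1 ≤ ‖w‖ ^ 2 := by nlinarith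
  rw [div_sub_one hwa, norm_div, div_le_iff₀ (norm_pos_iff.2 hwa),
    ← pow_le_pow_iff_left₀ (norm_nonneg _) (by positivity) two_ne_zero]
  nlinarith [mul_nonneg hc (sub_nonneg.2 hw2)]

theorem norm_mobius_sub_one_eq (ha0 : 0 < a) (ha1 : a < 1) {w : ℂ} (hw : ‖w‖ = 1) :
    ‖((1 - a ^ 2) / (1 + a ^ 2) : ℝ) * (w - a) / (w + a) - 1‖ = 2 * a / (1 + a ^ 2) := by
  have hwa : w + a ≠ 0 :=
    Complex.add_ofReal_ne_zero_of_norm_ne (by rw [abs_of_pos ha0]; linarith)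
  have h := normSq_mobius_sub_one a w 1
  simp only [mul_one, norm_one, one_pow, hw, sub_self, mul_zero] at h
  rw [div_sub_one hwa, norm_div, div_eq_iff (norm_ne_zero_iff.2 hwa),
    ← pow_left_inj₀ (norm_nonneg _) (by positivity) two_ne_zero]
  linarith

theorem norm_mul_add_lt_sq_mul_norm_sub (ha0 : 0 < a) (ha1 : a < 1) {x y : ℂ}
    (h : ‖x + y‖ < 2 * a / (1 + a ^ 2) * ‖y‖) :
    ‖(a : ℂ) * (((1 - a ^ 2) / (1 + a ^ 2) : ℝ) * y + x)‖
      < a ^ 2 * ‖((1 - a ^ 2) / (1 + a ^ 2) : ℝ) * y - x‖ := by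
  set lam : ℝ := (1 - a ^ 2) / (1 + a ^ 2)
  have hK : 0 < 2 * a * lam := mul_pos (by positivity) (div_pos (by nlinarith) (by positivity))
  have hid := normSq_mobius_add_one a (a * (lam * y + x)) (lam * y - x)
  rw [show (a : ℂ) * (lam * y + x) + a * (lam * y - x) = (2 * a * lam : ℝ) * y by
      push_cast; ring,
    show (lam : ℂ) * (a * (lam * y + x) - a * (lam * y - x)) + (2 * a * lam : ℝ) * y
      = (2 * a * lam : ℝ) * (x + y) by push_cast; ring,
    norm_mul, norm_mul, Complex.norm_real, Real.norm_of_nonneg hK.le] at hid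
  have hc : 0 < 4 * (1 - a ^ 2) / (1 + a ^ 2) ^ 2 := by
    apply div_pos <;> nlinarith
  rw [← pow_lt_pow_iff_left₀ (norm_nonneg _) (by positivity) two_ne_zero]
  have hxy : ‖x + y‖ ^ 2 < (2 * a / (1 + a ^ 2)) ^ 2 * ‖y‖ ^ 2 := by
    rw [← mul_pow]; exact pow_lt_pow_left₀ h (norm_nonneg _) two_ne_zero
  nlinarith [mul_pos (pow_pos hK 2) (sub_pos.2 hxy)]

theorem norm_sub_le_norm_mul_add (ha0 : 0 < a) (ha1 : a < 1) {x y : ℂ}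
    (h : ‖x - y‖ ≤ 2 * a / (1 + a ^ 2) * ‖y‖) :
    ‖((1 - a ^ 2) / (1 + a ^ 2) : ℝ) * y - x‖
      ≤ ‖(a : ℂ) * (((1 - a ^ 2) / (1 + a ^ 2) : ℝ) * y + x)‖ := by
  set lam : ℝ := (1 - a ^ 2) / (1 + a ^ 2)
  have hK : 0 < 2 * a * lam := mul_pos (by positivity) (div_pos (by nlinarith) (by positivity))
  have hid := normSq_mobius_sub_one a (a * (lam * y + x)) (lam * y - x)
  rw [show (a : ℂ) * (lam * y + x) + a * (lam * y - x) = (2 * a * lam : ℝ) * y by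
      push_cast; ring,
    show (lam : ℂ) * (a * (lam * y + x) - a * (lam * y - x)) - (2 * a * lam : ℝ) * y
      = (2 * a * lam : ℝ) * (x - y) by push_cast; ring,
    norm_mul, norm_mul, Complex.norm_real, Real.norm_of_nonneg hK.le] at hid
  have hc : 0 < 4 * (1 - a ^ 2) / (1 + a ^ 2) ^ 2 * a ^ 2 := by
    apply mul_pos (div_pos _ _) <;> nlinarith
  rw [← pow_le_pow_iff_left₀ (norm_nonneg _) (norm_nonneg _) two_ne_zero]
  have hxy : ‖x - y‖ ^ 2 ≤ (2 * a / (1 + a ^ 2)) ^ 2 * ‖y‖ ^ 2 := by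
    rw [← mul_pow]; exact pow_le_pow_left₀ (norm_nonneg _) h 2
  nlinarith [mul_nonneg (pow_pos hK 2).le (sub_nonneg.2 hxy)]

theorem isGreatest_norm_mobius_sub_signEF {E F : Set ℂ} (hdisj : Disjoint E F)
    (ha0 : 0 < a) (ha1 : a < 1) {r : ℂ → ℂ} (hrE : ∀ z ∈ E, ‖r z‖ ≤ a ^ 2)
    (hrF : IsLeast ((fun z => ‖r z‖) '' F) 1) :
    IsGreatest ((fun z => ‖((1 - a ^ 2) / (1 + a ^ 2) : ℝ) * (r z - a) / (r z + a)
      - signEF E z‖) '' (E ∪ F)) (2 * a / (1 + a ^ 2)) := by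
  obtain ⟨⟨z₀, hz₀, hrz₀⟩, hrF⟩ := hrF
  refine ⟨⟨z₀, Or.inr hz₀, ?_⟩, ?_⟩
  · dsimp only
    rw [signEF_of_notMem (disjoint_right.1 hdisj hz₀)]
    exact norm_mobius_sub_one_eq ha0 ha1 hrz₀
  · rintro _ ⟨z, hz | hz, rfl⟩ <;> dsimp only
    · rw [signEF_of_mem hz, sub_neg_eq_add]
      exact norm_mobius_add_one_le ha0 ha1 (hrE z hz)
    · rw [signEF_of_notMem (disjoint_right.1 hdisj hz)]
      exact norm_mobius_sub_one_le ha0 ha1 (hrF ⟨z, hz, rfl⟩)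

theorem zoloSigma_lt {n : ℕ} {E F : Set ℂ} (hE : IsCompact E) (hEne : E.Nonempty)
    (ha0 : 0 < a) (ha1 : a < 1) {p q : ℂ[X]} (hp : p.degree ≤ n) (hq : q.degree ≤ n)
    (hpqE : ∀ z ∈ E, ‖p.eval z + q.eval z‖ < 2 * a / (1 + a ^ 2) * ‖q.eval z‖)
    (hpqF : ∀ z ∈ F, ‖p.eval z - q.eval z‖ ≤ 2 * a / (1 + a ^ 2) * ‖q.eval z‖) :
    zoloSigma n E F < a ^ 2 := by
  set lam : ℝ := (1 - a ^ 2) / (1 + a ^ 2)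
  -- `p'/q' = a (λ + u)/(λ - u)` is the preimage of `u = p/q` under the Möbius map.
  set p' : ℂ[X] := (a : ℂ) • ((lam : ℂ) • q + p)
  set q' : ℂ[X] := (lam : ℂ) • q - p
  rw [← mem_degreeLE] at hp hq
  have hp' : p'.degree ≤ n :=
    mem_degreeLE.1 (Submodule.smul_mem _ _ (add_mem (Submodule.smul_mem _ _ hq) hp))
  have hq' : q'.degree ≤ n := mem_degreeLE.1 (sub_mem (Submodule.smul_mem _ _ hq) hp)
  have hp'eval : ∀ z, p'.eval z = a * (lam * q.eval z + p.eval z) := fun z => by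
    simp only [p', eval_smul, eval_add, smul_eq_mul]
  have hq'eval : ∀ z, q'.eval z = lam * q.eval z - p.eval z := fun z => by
    simp only [q', eval_smul, eval_sub, smul_eq_mul]
  have hlt : ∀ z ∈ E, ‖p'.eval z‖ < a ^ 2 * ‖q'.eval z‖ := fun z hz => by
    rw [hp'eval, hq'eval]; exact norm_mul_add_lt_sq_mul_norm_sub ha0 ha1 (hpqE z hz)
  have hq'0 : ∀ z ∈ E, q'.eval z ≠ 0 := fun z hz h0 =>
    (norm_nonneg _).not_gt (by simpa [h0] using hlt z hz)
  calc zoloSigma n E F ≤ sSup ((fun z => ‖p'.eval z / q'.eval z‖) '' E) :=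
        zoloSigma_le hp' hq' hq'0 fun z hz => by
          rw [hp'eval, hq'eval]; exact norm_sub_le_norm_mul_add ha0 ha1 (hpqF z hz)
    _ < a ^ 2 := by
      refine (hE.sSup_lt_iff_of_continuous hEne (continuousOn_eval_div p' hq'0).norm _).2
        fun z hz => ?_
      rw [norm_div, div_lt_iff₀ (norm_pos_iff.2 (hq'0 z hz))]
      exact hlt z hz

theorem le_sSup_norm_div_sub_signEF {n : ℕ} {E F : Set ℂ} (hE : IsCompact E)
    (hF : IsCompact F) (hEne : E.Nonempty) (hdisj : Disjoint E F) (ha0 : 0 < a) (ha1 : a < 1)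
    (hσ : a ^ 2 ≤ zoloSigma n E F) {p q : ℂ[X]} (hp : p.degree ≤ n) (hq : q.degree ≤ n)
    (hq0 : ∀ z ∈ E ∪ F, q.eval z ≠ 0) :
    2 * a / (1 + a ^ 2) ≤ sSup ((fun z => ‖p.eval z / q.eval z - signEF E z‖) '' (E ∪ F)) := by
  by_contra! ht
  have hlt : ∀ z ∈ E ∪ F, ‖p.eval z / q.eval z - signEF E z‖ < 2 * a / (1 + a ^ 2) :=
    fun z hz => (le_csSup (bddAbove_norm_div_sub_signEF hE hF hq0) ⟨z, hz, rfl⟩).trans_lt ht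
  refine (zoloSigma_lt hE hEne ha0 ha1 hp hq (fun z hz => ?_) (fun z hz => ?_)).not_ge hσ
  · have hqz := hq0 z (Or.inl hz)
    have hz' := hlt z (Or.inl hz)
    rwa [signEF_of_mem hz, sub_neg_eq_add, div_add_one hqz, norm_div,
      div_lt_iff₀ (norm_pos_iff.2 hqz)] at hz'
  · have hqz := hq0 z (Or.inr hz)
    have hz' := (hlt z (Or.inr hz)).le
    rwa [signEF_of_notMem (disjoint_right.1 hdisj hz), div_sub_one hqz, norm_div,
      div_le_iff₀ (norm_pos_iff.2 hqz)] at hz'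

end Mobius

end Zolotarev

open Zolotarev

theorem Z3_solution_gives_Z4_solution_general (n : ℕ) (E F : Set ℂ)
    (hE : IsCompact E) (hF : IsCompact F)
    (hEne : E.Nonempty)
    (hdisj : Disjoint E F)
    (p q : Polynomial ℂ) (hp : p.degree ≤ n) (hq : q.degree ≤ n)
    (hq0 : ∀ z ∈ E ∪ F, q.eval z ≠ 0)
    (r : ℂ → ℂ) (hr : ∀ z, r z = p.eval z / q.eval z)
    (hmin : IsLeast ((fun z => ‖r z‖) '' F) 1)
    (σ : ℝ) (hσ : σ = zoloSigma n E F)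
    (hsup : sSup ((fun z => ‖r z‖) '' E) = σ)
    (hσ0 : 0 < σ) (hσ1 : σ < 1)
    (rhat : ℂ → ℂ)
    (hrhat : ∀ z, rhat z =
      (((1 - σ) / (1 + σ) : ℝ) : ℂ) * (r z - (Real.sqrt σ : ℂ)) / (r z + (Real.sqrt σ : ℂ))) :
    (∀ z ∈ E ∪ F, r z + (Real.sqrt σ : ℂ) ≠ 0) ∧
    (∃ p' q' : Polynomial ℂ, p'.degree ≤ n ∧ q'.degree ≤ n ∧
      (∀ z ∈ E ∪ F, q'.eval z ≠ 0) ∧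
      (∀ z ∈ E ∪ F, rhat z = p'.eval z / q'.eval z)) ∧
    sSup ((fun z => ‖rhat z - signEF E z‖) '' (E ∪ F)) = 2 * Real.sqrt σ / (1 + σ) ∧
    2 * Real.sqrt σ / (1 + σ) = zoloTau n E F := by
  obtain ⟨a, ha0, rfl⟩ : ∃ a, 0 < a ∧ σ = a ^ 2 :=
    ⟨√σ, Real.sqrt_pos.2 hσ0, (Real.sq_sqrt hσ0.le).symm⟩
  have ha1 : a < 1 := by nlinarith
  rw [Real.sqrt_sq ha0.le] at hrhat ⊢
  obtain rfl : r = fun z => p.eval z / q.eval z := funext hr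
  obtain rfl := funext hrhat
  have hrE : ∀ z ∈ E, ‖p.eval z / q.eval z‖ ≤ a ^ 2 := fun z hz => hsup ▸
    le_csSup (hE.bddAbove_image (continuousOn_eval_div p fun z hz => hq0 z (Or.inl hz)).norm)
      ⟨z, hz, rfl⟩
  have hden : ∀ z ∈ E ∪ F, p.eval z / q.eval z + a ≠ 0 := by
    rintro z (hz | hz) <;> refine Complex.add_ofReal_ne_zero_of_norm_ne ?_ <;>
      rw [abs_of_pos ha0]
    · nlinarith [hrE z hz]
    · linarith [hmin.2 ⟨z, hz, rfl⟩]
  have herror := (isGreatest_norm_mobius_sub_signEF hdisj ha0 ha1 hrE hmin).csSup_eq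
  obtain ⟨p', q', hp', hq', hq'0, hratio⟩ := exists_ratio_eq_mobius hp hq hq0 _ _ hden
  have hmem : 2 * a / (1 + a ^ 2)
      = sSup ((fun z => ‖p'.eval z / q'.eval z - signEF E z‖) '' (E ∪ F)) := by
    rw [← herror]
    exact congrArg sSup (image_congr fun z hz => by rw [hratio z hz])
  refine ⟨hden, ⟨p', q', hp', hq', hq'0, hratio⟩, herror, ?_⟩
  exact (zoloTau_eq ⟨p', q', hp', hq', hq'0, hmem⟩ fun _ _ hp₂ hq₂ hq₂0 =>
    le_sSup_norm_div_sub_signEF hE hF hEne hdisj ha0 ha1 hσ.le hp₂ hq₂ hq₂0).symm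

/-- If `r* = p/q` solves the third Zolotarev problem (minimum modulus `1` on `F`, maximum
modulus `σ_n` on `E` with `0 < σ_n < 1`), then
`r̂ = ((1-σ_n)/(1+σ_n)) (r* - √σ_n)/(r* + √σ_n)` is a well-defined rational function of
degree at most `n` that solves the fourth Zolotarev problem, with
`sup_{z ∈ E ∪ F} |r̂(z) - sign_{E/F}(z)| = 2√σ_n/(1+σ_n) = τ_n`. -/
theorem Z3_solution_gives_Z4_solution (n : ℕ) (E F : Set ℂ)
    (hE : IsCompact E) (hF : IsCompact F)
    (hEne : E.Nonempty) (hFne : F.Nonempty)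
    (hdisj : Disjoint E F)
    (p q : Polynomial ℂ) (hp : p.degree ≤ n) (hq : q.degree ≤ n)
    (hq0 : ∀ z ∈ E ∪ F, q.eval z ≠ 0)
    (r : ℂ → ℂ) (hr : ∀ z, r z = p.eval z / q.eval z)
    (hmin : IsLeast ((fun z => ‖r z‖) '' F) 1)
    (σ : ℝ) (hσ : σ = zoloSigma n E F)
    (hsup : sSup ((fun z => ‖r z‖) '' E) = σ)
    (hσ0 : 0 < σ) (hσ1 : σ < 1)
    (rhat : ℂ → ℂ)
    (hrhat : ∀ z, rhat z =
      (((1 - σ) / (1 + σ) : ℝ) : ℂ) * (r z - (Real.sqrt σ : ℂ)) / (r z + (Real.sqrt σ : ℂ))) :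
    (∀ z ∈ E ∪ F, r z + (Real.sqrt σ : ℂ) ≠ 0) ∧
    (∃ p' q' : Polynomial ℂ, p'.degree ≤ n ∧ q'.degree ≤ n ∧
      (∀ z ∈ E ∪ F, q'.eval z ≠ 0) ∧
      (∀ z ∈ E ∪ F, rhat z = p'.eval z / q'.eval z)) ∧
    sSup ((fun z => ‖rhat z - signEF E z‖) '' (E ∪ F)) = 2 * Real.sqrt σ / (1 + σ) ∧
    2 * Real.sqrt σ / (1 + σ) = zoloTau n E F :=
  Z3_solution_gives_Z4_solution_general n E F hE hF hEne hdisj p q hp hq hq0 r hr hmin σ hσ hsup hσ0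
    hσ1 rhat hrhat
end

section
/- Let n ≥ 0 and let E, F be disjoint nonempty compact infinite subsets of ℂ. Then the minimal values of Problems Z3 and Z4 satisfy τ_n = 2√σ_n/(1+σ_n) and, equivalently, σ_n = (τ_n/(1 + √(1−τ_n²)))². -/
open Polynomial Set

/-! The Möbius map `w ↦ ((1 - k²)/(1 + k²)) (w - k)/(w + k)`, `0 < k < 1`, sends the disc
`|w| ≤ k²` onto the disc `|r + 1| ≤ 2k/(1 + k²)` and the exterior `|w| ≥ 1` onto the disc
`|r - 1| ≤ 2k/(1 + k²)`, without raising degrees. Composing competitors of Z3 with it and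
competitors of Z4 with its inverse gives `τ_n ≤ 2k/(1 + k²)` whenever `σ_n < k²`, and `σ_n ≤ k²`
whenever `τ_n < 2k/(1 + k²)`. As `k ↦ 2k/(1 + k²)` is an increasing bijection of `[0, 1]`, this
forces `τ_n = 2√σ_n/(1 + σ_n)`.

The one delicate point is that `p` and `q` may vanish together on `F`, where `p/q` is undefined.
Common zeros at accumulation points of `F` are cancelled, since `|q| ≤ |p|` survives there by
continuity; at the remaining isolated points of `E ∪ F` the transformed pair `(a, b)` is replaced
by `(a + δ, b + δ)`, which takes the value `1` there and is uniformly close to `a/b` elsewhere. -/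

-- With `k = tan (θ/2)` and `t = sin θ` these are the half-angle formulas.
noncomputable def sinOfTanHalf (k : ℝ) : ℝ := 2 * k / (1 + k ^ 2)

noncomputable def tanHalfOfSin (t : ℝ) : ℝ := t / (1 + √(1 - t ^ 2))

theorem strictMonoOn_sinOfTanHalf : StrictMonoOn sinOfTanHalf (Icc (-1) 1) := by
  intro x ⟨hx1, hx2⟩ y ⟨hy1, hy2⟩ hxy
  rw [sinOfTanHalf, sinOfTanHalf, div_lt_div_iff₀ (by positivity) (by positivity)]
  nlinarith [mul_nonneg (sub_nonneg.2 hx2) (neg_le_iff_add_nonneg.1 hy1),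
    mul_nonneg (neg_le_iff_add_nonneg.1 hx1) (sub_nonneg.2 hy2),
    mul_pos (sub_pos.2 hxy) (sub_pos.2 hxy)]

theorem tanHalfOfSin_mem_Icc {t : ℝ} (ht : t ∈ Icc (-1) 1) : tanHalfOfSin t ∈ Icc (-1) 1 := by
  have hu := Real.sqrt_nonneg (1 - t ^ 2)
  rw [tanHalfOfSin, mem_Icc, le_div_iff₀ (by positivity), div_le_one (by positivity)]
  constructor <;> linarith [ht.1, ht.2]

theorem sinOfTanHalf_tanHalfOfSin {t : ℝ} (ht : t ∈ Icc (-1) 1) :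
    sinOfTanHalf (tanHalfOfSin t) = t := by
  have hu := Real.sqrt_nonneg (1 - t ^ 2)
  have hu2 : √(1 - t ^ 2) ^ 2 = 1 - t ^ 2 := Real.sq_sqrt (by nlinarith [ht.1, ht.2])
  rw [sinOfTanHalf, tanHalfOfSin, div_eq_iff (by positivity)]
  field_simp
  linear_combination (-t) * hu2

theorem tanHalfOfSin_sinOfTanHalf {k : ℝ} (hk : k ∈ Icc (-1) 1) :
    tanHalfOfSin (sinOfTanHalf k) = k := by
  have hk2 : k ^ 2 ≤ 1 := by nlinarith [hk.1, hk.2]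
  have hroot : √(1 - sinOfTanHalf k ^ 2) = (1 - k ^ 2) / (1 + k ^ 2) := by
    rw [Real.sqrt_eq_iff_eq_sq _ (by positivity), sinOfTanHalf]
    · field_simp
      ring
    · rw [sinOfTanHalf, div_pow, sub_nonneg, div_le_one (by positivity)]
      nlinarith
  rw [tanHalfOfSin, hroot, sinOfTanHalf]
  field_simp
  ring

theorem le_sinOfTanHalf_mul_iff {k x y : ℝ} :
    x ≤ sinOfTanHalf k * y ↔ x * (1 + k ^ 2) ≤ 2 * k * y := by
  rw [sinOfTanHalf, div_mul_eq_mul_div, le_div_iff₀ (by positivity)]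

section Mobius

variable {V : Type*} [NormedAddCommGroup V] [InnerProductSpace ℝ V] {k : ℝ} {a b : V}

theorem norm_add_pow_three_smul_sq_sub (k : ℝ) (a b : V) :
    ‖a + k ^ 3 • b‖ ^ 2 - k ^ 2 * ‖a + k • b‖ ^ 2 =
      (1 - k ^ 2) * (‖a‖ ^ 2 - k ^ 4 * ‖b‖ ^ 2) := by
  simp only [norm_add_sq_real, real_inner_smul_right, norm_smul, Real.norm_eq_abs, mul_pow,
    sq_abs]
  ring

theorem norm_smul_add_sq_sub (k : ℝ) (a b : V) :
    ‖k • a + b‖ ^ 2 - ‖a + k • b‖ ^ 2 = (1 - k ^ 2) * (‖b‖ ^ 2 - ‖a‖ ^ 2) := by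
  simp only [norm_add_sq_real, real_inner_smul_left, real_inner_smul_right, norm_smul,
    Real.norm_eq_abs, mul_pow, sq_abs]
  ring

theorem norm_le_sq_mul_norm_iff_norm_add_pow_three_smul_le (hk0 : 0 ≤ k) (hk1 : k < 1) :
    ‖a‖ ≤ k ^ 2 * ‖b‖ ↔ ‖a + k ^ 3 • b‖ ≤ k * ‖a + k • b‖ := by
  have hid := norm_add_pow_three_smul_sq_sub k a b
  have hk : 0 < 1 - k ^ 2 := by nlinarith
  rw [← pow_le_pow_iff_left₀ (norm_nonneg _) (by positivity) two_ne_zero,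
    ← pow_le_pow_iff_left₀ (norm_nonneg _) (by positivity) two_ne_zero]
  constructor <;> intro h <;> nlinarith

theorem norm_le_norm_iff_norm_smul_add_le (hk : |k| < 1) :
    ‖b‖ ≤ ‖a‖ ↔ ‖k • a + b‖ ≤ ‖a + k • b‖ := by
  have hid := norm_smul_add_sq_sub k a b
  have hk : 0 < 1 - k ^ 2 := by nlinarith [sq_abs k, abs_nonneg k]
  rw [← pow_le_pow_iff_left₀ (norm_nonneg _) (norm_nonneg _) two_ne_zero,
    ← pow_le_pow_iff_left₀ (norm_nonneg _) (norm_nonneg _) two_ne_zero]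
  constructor <;> intro h <;> nlinarith

theorem eq_zero_of_add_smul_eq_zero (hk0 : 0 ≤ k) (hk1 : k < 1) (h : ‖b‖ ≤ ‖a‖)
    (hab : a + k • b = 0) : a = 0 ∧ b = 0 := by
  have ha : ‖a‖ = k * ‖b‖ := by
    rw [eq_neg_of_add_eq_zero_left hab, norm_neg, norm_smul, Real.norm_of_nonneg hk0]
  have ha0 : ‖a‖ = 0 := by nlinarith [norm_nonneg a, norm_nonneg b]
  exact ⟨norm_eq_zero.1 ha0, norm_eq_zero.1 (le_antisymm (ha0 ▸ h) (norm_nonneg b))⟩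

theorem mobius_bound_of_norm_le_sq_mul (hk0 : 0 < k) (hk1 : k < 1) (hb : b ≠ 0)
    (h : ‖a‖ ≤ k ^ 2 * ‖b‖) :
    (1 + k ^ 2) • (a + k • b) ≠ 0 ∧
      ‖(1 - k ^ 2) • (a - k • b) + (1 + k ^ 2) • (a + k • b)‖ ≤
        sinOfTanHalf k * ‖(1 + k ^ 2) • (a + k • b)‖ := by
  refine ⟨smul_ne_zero (by positivity) fun hab => ?_, ?_⟩
  · rw [eq_neg_of_add_eq_zero_left hab, norm_neg, norm_smul, Real.norm_of_nonneg hk0.le] at h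
    nlinarith [mul_pos (mul_pos hk0 (sub_pos.2 hk1)) (norm_pos_iff.2 hb)]
  · have hsum : (1 - k ^ 2) • (a - k • b) + (1 + k ^ 2) • (a + k • b) =
        (2 : ℝ) • (a + k ^ 3 • b) := by module
    have := (norm_le_sq_mul_norm_iff_norm_add_pow_three_smul_le hk0.le hk1).1 h
    rw [hsum, norm_smul, norm_smul, Real.norm_of_nonneg (by positivity),
      Real.norm_of_nonneg (by positivity), le_sinOfTanHalf_mul_iff]
    nlinarith [norm_nonneg (a + k • b)]

theorem mobius_bound_of_norm_le_norm (hk0 : 0 ≤ k) (hk1 : k < 1) (h : ‖b‖ ≤ ‖a‖) :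
    ‖(1 - k ^ 2) • (a - k • b) - (1 + k ^ 2) • (a + k • b)‖ ≤
      sinOfTanHalf k * ‖(1 + k ^ 2) • (a + k • b)‖ := by
  have hdiff : (1 - k ^ 2) • (a - k • b) - (1 + k ^ 2) • (a + k • b) =
      -((2 * k) • (k • a + b)) := by module
  have := (norm_le_norm_iff_norm_smul_add_le (abs_lt.2 ⟨by linarith, hk1⟩)).1 h
  rw [hdiff, norm_neg, norm_smul, norm_smul, Real.norm_of_nonneg (by positivity),
    Real.norm_of_nonneg (by positivity), le_sinOfTanHalf_mul_iff]
  nlinarith [mul_le_mul_of_nonneg_left this (by positivity : 0 ≤ 2 * k * (1 + k ^ 2))]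

theorem inverseMobius_bound_of_norm_add_le (hk0 : 0 ≤ k) (hk1 : k < 1) (hb : b ≠ 0)
    (h : ‖a + b‖ ≤ sinOfTanHalf k * ‖b‖) :
    (1 + k ^ 2) • a - (1 - k ^ 2) • b ≠ 0 ∧
      ‖-(k • ((1 + k ^ 2) • a + (1 - k ^ 2) • b))‖ ≤
        k ^ 2 * ‖(1 + k ^ 2) • a - (1 - k ^ 2) • b‖ := by
  have h' := le_sinOfTanHalf_mul_iff.1 h
  have hk : 0 ≤ 1 - k ^ 2 := by nlinarith
  refine ⟨fun h0 => ?_, (norm_le_sq_mul_norm_iff_norm_add_pow_three_smul_le hk0 hk1).2 ?_⟩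
  · have hab : (1 + k ^ 2) • (a + b) = (2 : ℝ) • b := by
      rw [← sub_eq_zero, ← h0]
      module
    have := congrArg norm hab
    rw [norm_smul, norm_smul, Real.norm_of_nonneg (by positivity), Real.norm_two] at this
    nlinarith [norm_pos_iff.2 hb]
  · have e3 : -(k • ((1 + k ^ 2) • a + (1 - k ^ 2) • b)) +
        k ^ 3 • ((1 + k ^ 2) • a - (1 - k ^ 2) • b) =
        -((k * (1 - k ^ 2) * (1 + k ^ 2)) • (a + b)) := by module
    have e1 : -(k • ((1 + k ^ 2) • a + (1 - k ^ 2) • b)) +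
        k • ((1 + k ^ 2) • a - (1 - k ^ 2) • b) = -((2 * k * (1 - k ^ 2)) • b) := by module
    rw [e3, e1, norm_neg, norm_neg, norm_smul, norm_smul, Real.norm_of_nonneg (by positivity),
      Real.norm_of_nonneg (by positivity)]
    nlinarith [mul_le_mul_of_nonneg_left h' (by positivity : 0 ≤ k * (1 - k ^ 2))]

theorem inverseMobius_bound_of_norm_sub_le (hk0 : 0 ≤ k) (hk1 : k < 1)
    (h : ‖a - b‖ ≤ sinOfTanHalf k * ‖b‖) :
    ‖(1 + k ^ 2) • a - (1 - k ^ 2) • b‖ ≤ ‖-(k • ((1 + k ^ 2) • a + (1 - k ^ 2) • b))‖ := by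
  have h' := le_sinOfTanHalf_mul_iff.1 h
  have hk : 0 ≤ 1 - k ^ 2 := by nlinarith
  refine (norm_le_norm_iff_norm_smul_add_le (abs_lt.2 ⟨by linarith, hk1⟩)).2 ?_
  have e0 : k • -(k • ((1 + k ^ 2) • a + (1 - k ^ 2) • b)) +
      ((1 + k ^ 2) • a - (1 - k ^ 2) • b) = ((1 - k ^ 2) * (1 + k ^ 2)) • (a - b) := by module
  have e1 : -(k • ((1 + k ^ 2) • a + (1 - k ^ 2) • b)) +
      k • ((1 + k ^ 2) • a - (1 - k ^ 2) • b) = -((2 * k * (1 - k ^ 2)) • b) := by module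
  rw [e0, e1, norm_neg, norm_smul, norm_smul, Real.norm_of_nonneg (by positivity),
    Real.norm_of_nonneg (by positivity)]
  nlinarith [mul_le_mul_of_nonneg_left h' hk]

end Mobius

theorem norm_div_sub_le_iff {𝕜 : Type*} [NormedField 𝕜] {x y c : 𝕜} {t : ℝ} (hy : y ≠ 0) :
    ‖x / y - c‖ ≤ t ↔ ‖x - c * y‖ ≤ t * ‖y‖ := by
  rw [div_sub' hy, norm_div, div_le_iff₀ (norm_pos_iff.2 hy), mul_comm y c]

theorem IsCompact.diff_of_forall_notMem_closure {X : Type*} [TopologicalSpace X] {K Z : Set X}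
    (hK : IsCompact K) (hZ : ∀ x ∈ K, x ∈ Z → x ∉ closure (K \ {x})) : IsCompact (K \ Z) := by
  convert hK.inter_right (isClosed_closure (s := K \ Z)) using 1
  refine Subset.antisymm (fun x hx => ⟨hx.1, subset_closure hx⟩) fun x ⟨hxK, hxc⟩ =>
    ⟨hxK, fun hxZ => hZ x hxK hxZ
      (closure_mono (sdiff_subset_sdiff_right (singleton_subset_iff.2 hxZ)) hxc)⟩

open Topology in
theorem IsCompact.exists_forall_norm_add_div_add_sub_div_lt {X 𝕜 : Type*} [TopologicalSpace X]
    [NontriviallyNormedField 𝕜] {L : Set X} (hL : IsCompact L) {f g : X → 𝕜}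
    (hf : Continuous f) (hg : Continuous g) (hg0 : ∀ z ∈ L, g z ≠ 0) {ε : ℝ} (hε : 0 < ε) :
    ∃ δ : 𝕜, δ ≠ 0 ∧ ∀ z ∈ L, g z + δ ≠ 0 ∧ ‖(f z + δ) / (g z + δ) - f z / g z‖ < ε := by
  have hev : ∀ z ∈ L, ∀ᶠ w : 𝕜 × X in 𝓝 (0, z),
      g w.2 + w.1 ≠ 0 ∧ ‖(f w.2 + w.1) / (g w.2 + w.1) - f w.2 / g w.2‖ < ε := by
    intro z hz
    have hz0 : g z + 0 ≠ 0 := by simpa using hg0 z hz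
    have hc : ContinuousAt
        (fun w : 𝕜 × X => ‖(f w.2 + w.1) / (g w.2 + w.1) - f w.2 / g w.2‖) (0, z) := by
      fun_prop (disch := first | exact hz0 | exact hg0 z hz)
    exact (ContinuousAt.eventually_ne (g := fun w : 𝕜 × X => g w.2 + w.1) (by fun_prop) hz0).and
      (hc.eventually_lt continuousAt_const (by simpa using hε))
  obtain ⟨δ, hδ, hδ0⟩ := (((hL.eventually_forall_of_forall_eventually (P := fun δ z =>
    g z + δ ≠ 0 ∧ ‖(f z + δ) / (g z + δ) - f z / g z‖ < ε) hev).filter_mono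
    nhdsWithin_le_nhds).and (self_mem_nhdsWithin (s := {0}ᶜ))).exists
  exact ⟨δ, hδ0, hδ⟩

theorem continuousOn_norm_eval_div {A : Set ℂ} {p q : ℂ[X]} (hq : ∀ z ∈ A, q.eval z ≠ 0) :
    ContinuousOn (fun z => ‖p.eval z / q.eval z‖) A :=
  (p.continuousOn.div q.continuousOn hq).norm

theorem norm_signEF (E : Set ℂ) (z : ℂ) : ‖signEF E z‖ = 1 := by
  unfold signEF
  split_ifs <;> simp

theorem signEF_of_mem {E : Set ℂ} {z : ℂ} (hz : z ∈ E) : signEF E z = -1 := if_pos hz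

theorem signEF_of_notMem {E : Set ℂ} {z : ℂ} (hz : z ∉ E) : signEF E z = 1 := if_neg hz

structure IsZ3Competitor (n : ℕ) (E F : Set ℂ) (s : ℝ) (p q : ℂ[X]) : Prop where
  degree_num : p.degree ≤ n
  degree_den : q.degree ≤ n
  den_ne_zero : ∀ z ∈ E, q.eval z ≠ 0
  norm_num_le : ∀ z ∈ E, ‖p.eval z‖ ≤ s * ‖q.eval z‖
  norm_den_le : ∀ z ∈ F, ‖q.eval z‖ ≤ ‖p.eval z‖

structure IsZ4Competitor (n : ℕ) (E F : Set ℂ) (t : ℝ) (p q : ℂ[X]) : Prop where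
  degree_num : p.degree ≤ n
  degree_den : q.degree ≤ n
  den_ne_zero : ∀ z ∈ E ∪ F, q.eval z ≠ 0
  norm_sub_sign_le : ∀ z ∈ E ∪ F, ‖p.eval z / q.eval z - signEF E z‖ ≤ t

section Zolotarev

variable {n : ℕ} {E F : Set ℂ} {s t k ε : ℝ} {p q : ℂ[X]}

theorem zoloSigma_nonneg : 0 ≤ zoloSigma n E F :=
  Real.sInf_nonneg <| by
    rintro _ ⟨p, q, -, -, -, -, rfl⟩
    exact Real.sSup_nonneg <| by rintro _ ⟨z, -, rfl⟩; positivity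

theorem zoloTau_nonneg : 0 ≤ zoloTau n E F :=
  Real.sInf_nonneg <| by
    rintro _ ⟨p, q, -, -, -, rfl⟩
    exact Real.sSup_nonneg <| by rintro _ ⟨z, -, rfl⟩; positivity

theorem zoloSigma_le (hE : E.Nonempty) (h : IsZ3Competitor n E F s p q) :
    zoloSigma n E F ≤ s := by
  unfold zoloSigma
  refine (csInf_le ⟨0, fun _ hx => ?_⟩
    (by exact ⟨p, q, h.degree_num, h.degree_den, h.den_ne_zero, h.norm_den_le, rfl⟩)).trans
    (csSup_le (hE.image _) ?_)
  · obtain ⟨p, q, -, -, -, -, rfl⟩ := hx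
    exact Real.sSup_nonneg <| by rintro _ ⟨z, -, rfl⟩; positivity
  · rintro _ ⟨z, hz, rfl⟩
    dsimp only
    rw [norm_div, div_le_iff₀ (norm_pos_iff.2 (h.den_ne_zero z hz))]
    exact h.norm_num_le z hz

theorem zoloTau_le (hEF : (E ∪ F).Nonempty) (h : IsZ4Competitor n E F t p q) :
    zoloTau n E F ≤ t := by
  unfold zoloTau
  refine (csInf_le ⟨0, fun _ hx => ?_⟩
    (by exact ⟨p, q, h.degree_num, h.degree_den, h.den_ne_zero, rfl⟩)).trans
    (csSup_le (hEF.image _) ?_)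
  · obtain ⟨p, q, -, -, -, rfl⟩ := hx
    exact Real.sSup_nonneg <| by rintro _ ⟨z, -, rfl⟩; positivity
  · rintro _ ⟨z, hz, rfl⟩
    exact h.norm_sub_sign_le z hz

theorem zoloSigma_le_one (hE : E.Nonempty) : zoloSigma n E F ≤ 1 :=
  zoloSigma_le hE (p := 1) (q := 1) ⟨by simp, by simp, by simp, by simp, by simp⟩

theorem zoloTau_le_one (hEF : (E ∪ F).Nonempty) : zoloTau n E F ≤ 1 :=
  zoloTau_le hEF (p := 0) (q := 1) ⟨by simp, by simp, by simp, by simp [norm_signEF]⟩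

theorem exists_isZ3Competitor_of_zoloSigma_lt (hE : IsCompact E) (h : zoloSigma n E F < s) :
    ∃ p q, IsZ3Competitor n E F s p q := by
  unfold zoloSigma at h
  obtain ⟨_, ⟨p, q, hp, hq, hqE, hF, rfl⟩, hlt⟩ :=
    exists_lt_of_csInf_lt (by exact ⟨_, 1, 1, by simp, by simp, by simp, by simp, rfl⟩) h
  refine ⟨p, q, hp, hq, hqE, fun z hz => ?_, hF⟩
  have hbdd := hE.bddAbove_image (continuousOn_norm_eval_div (p := p) hqE)
  have := (le_csSup hbdd (mem_image_of_mem _ hz)).trans hlt.le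
  rwa [norm_div, div_le_iff₀ (norm_pos_iff.2 (hqE z hz))] at this

theorem exists_isZ4Competitor_of_zoloTau_lt (hE : IsCompact E) (hF : IsCompact F)
    (h : zoloTau n E F < t) : ∃ p q, IsZ4Competitor n E F t p q := by
  unfold zoloTau at h
  obtain ⟨_, ⟨p, q, hp, hq, hqK, rfl⟩, hlt⟩ :=
    exists_lt_of_csInf_lt (by exact ⟨_, 0, 1, by simp, by simp, by simp, rfl⟩) h
  refine ⟨p, q, hp, hq, hqK, fun z hz => ?_⟩
  obtain ⟨M, hM⟩ := (hE.union hF).bddAbove_image (continuousOn_norm_eval_div (p := p) hqK)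
  have hbdd : BddAbove ((fun z => ‖p.eval z / q.eval z - signEF E z‖) '' (E ∪ F)) := by
    refine ⟨M + 1, ?_⟩
    rintro _ ⟨z, hz, rfl⟩
    linarith [norm_sub_le (p.eval z / q.eval z) (signEF E z), norm_signEF E z,
      hM (mem_image_of_mem _ hz)]
  exact (le_csSup hbdd (mem_image_of_mem _ hz)).trans hlt.le

theorem IsZ4Competitor.inverseMobius (h : IsZ4Competitor n E F (sinOfTanHalf k) p q)
    (hdisj : Disjoint E F) (hk0 : 0 ≤ k) (hk1 : k < 1) :
    IsZ3Competitor n E F (k ^ 2) (-(k • ((1 + k ^ 2) • p + (1 - k ^ 2) • q)))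
      ((1 + k ^ 2) • p - (1 - k ^ 2) • q) := by
  have hp := mem_degreeLE.2 h.degree_num
  have hq := mem_degreeLE.2 h.degree_den
  have hE : ∀ z ∈ E, ‖p.eval z + q.eval z‖ ≤ sinOfTanHalf k * ‖q.eval z‖ := fun z hz => by
    have := h.norm_sub_sign_le z (Or.inl hz)
    rwa [signEF_of_mem hz, norm_div_sub_le_iff (h.den_ne_zero z (Or.inl hz)), neg_one_mul,
      sub_neg_eq_add] at this
  have hF : ∀ z ∈ F, ‖p.eval z - q.eval z‖ ≤ sinOfTanHalf k * ‖q.eval z‖ := fun z hz => by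
    have := h.norm_sub_sign_le z (Or.inr hz)
    rwa [signEF_of_notMem (disjoint_right.1 hdisj hz),
      norm_div_sub_le_iff (h.den_ne_zero z (Or.inr hz)), one_mul] at this
  refine ⟨mem_degreeLE.1 ?_, mem_degreeLE.1 ?_, fun z hz => ?_, fun z hz => ?_, fun z hz => ?_⟩
  · exact neg_mem (Submodule.smul_of_tower_mem _ k
      (add_mem (Submodule.smul_of_tower_mem _ _ hp) (Submodule.smul_of_tower_mem _ _ hq)))
  · exact sub_mem (Submodule.smul_of_tower_mem _ _ hp) (Submodule.smul_of_tower_mem _ _ hq)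
  all_goals simp only [eval_neg, eval_smul, eval_add, eval_sub]
  · exact (inverseMobius_bound_of_norm_add_le hk0 hk1 (h.den_ne_zero z (Or.inl hz)) (hE z hz)).1
  · exact (inverseMobius_bound_of_norm_add_le hk0 hk1 (h.den_ne_zero z (Or.inl hz)) (hE z hz)).2
  · exact inverseMobius_bound_of_norm_sub_le hk0 hk1 (hF z hz)

theorem zoloSigma_le_sq_of_zoloTau_lt (hE : IsCompact E) (hF : IsCompact F) (hEne : E.Nonempty)
    (hdisj : Disjoint E F) (hk0 : 0 ≤ k) (hk1 : k < 1) (h : zoloTau n E F < sinOfTanHalf k) :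
    zoloSigma n E F ≤ k ^ 2 := by
  obtain ⟨p, q, hpq⟩ := exists_isZ4Competitor_of_zoloTau_lt hE hF h
  exact zoloSigma_le hEne (hpq.inverseMobius hdisj hk0 hk1)

theorem IsZ3Competitor.divByMonic (h : IsZ3Competitor n E F s p q) (hdisj : Disjoint E F)
    {x : ℂ} (hxF : x ∈ F) (hx : x ∈ closure (F \ {x})) (hp : p.IsRoot x) (hq : q.IsRoot x) :
    IsZ3Competitor n E F s (p /ₘ (X - C x)) (q /ₘ (X - C x)) := by
  have hpP : ∀ z, p.eval z = (z - x) * (p /ₘ (X - C x)).eval z := fun z => by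
    conv_lhs => rw [← mul_divByMonic_eq_iff_isRoot.2 hp]
    simp
  have hqQ : ∀ z, q.eval z = (z - x) * (q /ₘ (X - C x)).eval z := fun z => by
    conv_lhs => rw [← mul_divByMonic_eq_iff_isRoot.2 hq]
    simp
  have hoff : ∀ z ∈ F \ {x}, ‖(q /ₘ (X - C x)).eval z‖ ≤ ‖(p /ₘ (X - C x)).eval z‖ :=
    fun z ⟨hzF, hzx⟩ => by
      have := h.norm_den_le z hzF
      rw [hpP, hqQ, norm_mul, norm_mul] at this
      exact le_of_mul_le_mul_left this (norm_pos_iff.2 (sub_ne_zero.2 hzx))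
  refine ⟨(degree_divByMonic_le _ _).trans h.degree_num,
    (degree_divByMonic_le _ _).trans h.degree_den,
    fun z hz hQ => h.den_ne_zero z hz (by rw [hqQ, hQ, mul_zero]), fun z hz => ?_, fun z hz => ?_⟩
  · have := h.norm_num_le z hz
    rw [hpP, hqQ, norm_mul, norm_mul, mul_left_comm] at this
    exact le_of_mul_le_mul_left this
      (norm_pos_iff.2 (sub_ne_zero.2 fun hzx => disjoint_left.1 hdisj hz (hzx ▸ hxF)))
  · by_cases hzx : z = x
    · rw [hzx]
      exact closure_minimal hoff
        (isClosed_le (q /ₘ (X - C x)).continuous.norm (p /ₘ (X - C x)).continuous.norm) hx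
    · exact hoff z ⟨hz, hzx⟩

theorem IsZ3Competitor.exists_commonRoots_isolated (h : IsZ3Competitor n E F s p q)
    (hdisj : Disjoint E F) (hEne : E.Nonempty) :
    ∃ p' q', IsZ3Competitor n E F s p' q' ∧
      ∀ x ∈ F, p'.IsRoot x → q'.IsRoot x → x ∉ closure (F \ {x}) := by
  induction hd : q.natDegree using Nat.strong_induction_on generalizing p q with
  | _ d ih =>
  by_cases hbad : ∃ x ∈ F, p.IsRoot x ∧ q.IsRoot x ∧ x ∈ closure (F \ {x})
  · obtain ⟨x, hxF, hp, hq, hx⟩ := hbad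
    have hq0 : q ≠ 0 := fun hq0 => h.den_ne_zero _ hEne.some_mem (by simp [hq0])
    refine ih _ ?_ (h.divByMonic hdisj hxF hx hp hq) rfl
    rw [← hd, natDegree_divByMonic _ (monic_X_sub_C x), natDegree_X_sub_C]
    exact Nat.sub_lt (natDegree_pos_iff_degree_pos.2 (degree_pos_of_root hq0 hq)) one_pos
  · push Not at hbad
    exact ⟨p, q, h, hbad⟩

theorem IsZ3Competitor.norm_mobius_sub_sign_le (h : IsZ3Competitor n E F (k ^ 2) p q)
    (hdisj : Disjoint E F) (hk0 : 0 < k) (hk1 : k < 1) {z : ℂ} (hz : z ∈ E ∪ F)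
    (hbz : ((1 + k ^ 2) • (p + k • q)).eval z ≠ 0) :
    ‖((1 - k ^ 2) • (p - k • q)).eval z / ((1 + k ^ 2) • (p + k • q)).eval z - signEF E z‖ ≤
      sinOfTanHalf k := by
  rw [norm_div_sub_le_iff hbz]
  simp only [eval_smul, eval_add, eval_sub]
  rcases hz with hz | hz
  · rw [signEF_of_mem hz, neg_one_mul, sub_neg_eq_add]
    exact (mobius_bound_of_norm_le_sq_mul hk0 hk1 (h.den_ne_zero z hz) (h.norm_num_le z hz)).2
  · rw [signEF_of_notMem (disjoint_right.1 hdisj hz), one_mul]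
    exact mobius_bound_of_norm_le_norm hk0.le hk1 (h.norm_den_le z hz)

theorem IsZ3Competitor.isRoot_of_mobius_eval_eq_zero (h : IsZ3Competitor n E F (k ^ 2) p q)
    (hk0 : 0 < k) (hk1 : k < 1) {z : ℂ} (hz : z ∈ E ∪ F)
    (hbz : ((1 + k ^ 2) • (p + k • q)).eval z = 0) : z ∈ F ∧ p.IsRoot z ∧ q.IsRoot z := by
  simp only [eval_smul, eval_add] at hbz
  rcases hz with hz | hz
  · exact absurd hbz
      (mobius_bound_of_norm_le_sq_mul hk0 hk1 (h.den_ne_zero z hz) (h.norm_num_le z hz)).1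
  · rw [smul_eq_zero] at hbz
    exact ⟨hz, eq_zero_of_add_smul_eq_zero hk0.le hk1 (h.norm_den_le z hz)
      (hbz.resolve_left (by positivity))⟩

theorem IsZ3Competitor.exists_isZ4Competitor (h : IsZ3Competitor n E F (k ^ 2) p q)
    (hiso : ∀ x ∈ F, p.IsRoot x → q.IsRoot x → x ∉ closure (F \ {x}))
    (hE : IsCompact E) (hF : IsCompact F) (hdisj : Disjoint E F) (hk0 : 0 < k) (hk1 : k < 1)
    (hε : 0 < ε) : ∃ a b, IsZ4Competitor n E F (sinOfTanHalf k + ε) a b := by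
  set a := (1 - k ^ 2) • (p - k • q)
  set b := (1 + k ^ 2) • (p + k • q)
  have hroot : ∀ z ∈ E ∪ F, b.eval z = 0 → z ∈ F ∧ p.IsRoot z ∧ q.IsRoot z :=
    fun _ hz hbz => h.isRoot_of_mobius_eval_eq_zero hk0 hk1 hz hbz
  have hisolated : ∀ x ∈ E ∪ F, b.eval x = 0 → x ∉ closure ((E ∪ F) \ {x}) := by
    intro x hx hbx hcl
    obtain ⟨hxF, hp, hq⟩ := hroot x hx hbx
    have hsub : (E ∪ F) \ {x} ⊆ E ∪ (F \ {x}) := by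
      rw [union_sdiff_distrib]
      exact union_subset_union_left _ sdiff_subset
    have := closure_mono hsub hcl
    rw [closure_union, hE.isClosed.closure_eq] at this
    exact hiso x hxF hp hq (this.resolve_left (disjoint_right.1 hdisj hxF))
  obtain ⟨δ, hδ, hδL⟩ := ((hE.union hF).diff_of_forall_notMem_closure (Z := {z | b.eval z = 0})
    hisolated).exists_forall_norm_add_div_add_sub_div_lt a.continuous b.continuous
    (fun z hz => hz.2) hε
  have hdeg : ∀ c : ℂ[X], c ∈ degreeLE ℂ n → (c + C δ).degree ≤ n := fun c hc =>
    (degree_add_le _ _).trans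
      (max_le (mem_degreeLE.1 hc) (degree_C_le.trans (WithBot.coe_le_coe.2 n.zero_le)))
  have hp := mem_degreeLE.2 h.degree_num
  have hq := Submodule.smul_of_tower_mem _ k (mem_degreeLE.2 h.degree_den)
  refine ⟨a + C δ, b + C δ, hdeg a (Submodule.smul_of_tower_mem _ _ (sub_mem hp hq)),
    hdeg b (Submodule.smul_of_tower_mem _ _ (add_mem hp hq)), fun z hz => ?_, fun z hz => ?_⟩
  · by_cases hbz : b.eval z = 0
    · simpa [hbz] using hδ
    · simpa using (hδL z ⟨hz, hbz⟩).1
  · by_cases hbz : b.eval z = 0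
    · obtain ⟨hzF, hpz, hqz⟩ := hroot z hz hbz
      have hk : 0 ≤ sinOfTanHalf k := by unfold sinOfTanHalf; positivity
      have haz : a.eval z = 0 := by simp [a, hpz.eq_zero, hqz.eq_zero]
      simp [hbz, haz, hδ, signEF_of_notMem (disjoint_right.1 hdisj hzF)]
      linarith
    · simp only [eval_add, eval_C]
      exact (norm_sub_le_norm_sub_add_norm_sub _ (a.eval z / b.eval z) _).trans
        (by linarith [(hδL z ⟨hz, hbz⟩).2, h.norm_mobius_sub_sign_le hdisj hk0 hk1 hz hbz])

theorem zoloTau_le_of_zoloSigma_lt_sq (hE : IsCompact E) (hF : IsCompact F) (hEne : E.Nonempty)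
    (hdisj : Disjoint E F) (hk0 : 0 < k) (hk1 : k < 1) (h : zoloSigma n E F < k ^ 2) :
    zoloTau n E F ≤ sinOfTanHalf k := by
  obtain ⟨p, q, hpq⟩ := exists_isZ3Competitor_of_zoloSigma_lt hE h
  obtain ⟨p', q', hpq', hiso⟩ := hpq.exists_commonRoots_isolated hdisj hEne
  refine le_of_forall_pos_le_add fun ε hε => ?_
  obtain ⟨a, b, hab⟩ := hpq'.exists_isZ4Competitor hiso hE hF hdisj hk0 hk1 hε
  exact zoloTau_le hEne.inl hab

theorem tanHalfOfSin_zoloTau (hE : IsCompact E) (hF : IsCompact F) (hEne : E.Nonempty)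
    (hdisj : Disjoint E F) : tanHalfOfSin (zoloTau n E F) = √(zoloSigma n E F) := by
  have hτ : zoloTau n E F ∈ Icc (-1) 1 :=
    ⟨by linarith [(zoloTau_nonneg : 0 ≤ zoloTau n E F)], zoloTau_le_one hEne.inl⟩
  have hσ : √(zoloSigma n E F) ≤ 1 := Real.sqrt_le_one.2 (zoloSigma_le_one hEne)
  have hKτ := tanHalfOfSin_mem_Icc hτ
  have hKτ0 : 0 ≤ tanHalfOfSin (zoloTau n E F) := div_nonneg zoloTau_nonneg (by positivity)
  refine le_antisymm (not_lt.1 fun hlt => ?_) (not_lt.1 fun hlt => ?_)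
  · obtain ⟨k, hσk, hkτ⟩ := exists_between hlt
    have hk0 : 0 < k := (Real.sqrt_nonneg _).trans_lt hσk
    have := zoloTau_le_of_zoloSigma_lt_sq hE hF hEne hdisj hk0 (hkτ.trans_le hKτ.2)
      ((Real.sqrt_lt' hk0).1 hσk)
    rw [← sinOfTanHalf_tanHalfOfSin hτ, strictMonoOn_sinOfTanHalf.le_iff_le hKτ
      ⟨by linarith, (hkτ.trans_le hKτ.2).le⟩] at this
    linarith
  · obtain ⟨k, hτk, hkσ⟩ := exists_between hlt
    have hk0 : 0 ≤ k := hKτ0.trans hτk.le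
    have hτk' : zoloTau n E F < sinOfTanHalf k := by
      rw [← sinOfTanHalf_tanHalfOfSin hτ]
      exact strictMonoOn_sinOfTanHalf hKτ ⟨by linarith, (hkσ.trans_le hσ).le⟩ hτk
    have := zoloSigma_le_sq_of_zoloTau_lt hE hF hEne hdisj hk0 (hkσ.trans_le hσ) hτk'
    linarith [(Real.sqrt_le_left hk0).2 this]

end Zolotarev

theorem zolotarev_minimal_values_relation_general (n : ℕ) (E F : Set ℂ)
    (hE : IsCompact E) (hF : IsCompact F)
    (hEne : E.Nonempty)
    (hdisj : Disjoint E F) :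
    zoloTau n E F = 2 * Real.sqrt (zoloSigma n E F) / (1 + zoloSigma n E F) ∧
    zoloSigma n E F =
      (zoloTau n E F / (1 + Real.sqrt (1 - (zoloTau n E F) ^ 2))) ^ 2 := by
  have hσ : 0 ≤ zoloSigma n E F := zoloSigma_nonneg
  have hτ : zoloTau n E F ∈ Icc (-1) 1 :=
    ⟨by linarith [(zoloTau_nonneg : 0 ≤ zoloTau n E F)], zoloTau_le_one hEne.inl⟩
  have hkey := tanHalfOfSin_zoloTau (n := n) hE hF hEne hdisj
  constructor
  · rw [← sinOfTanHalf_tanHalfOfSin hτ, hkey, sinOfTanHalf, Real.sq_sqrt hσ]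
  · change _ = tanHalfOfSin (zoloTau n E F) ^ 2
    rw [hkey, Real.sq_sqrt hσ]

/-- The minimal values of the third and fourth Zolotarev problems satisfy
`τ_n = 2√σ_n/(1+σ_n)` and, equivalently, `σ_n = (τ_n/(1+√(1-τ_n²)))²`. -/
theorem zolotarev_minimal_values_relation (n : ℕ) (E F : Set ℂ)
    (hE : IsCompact E) (hF : IsCompact F)
    (hEne : E.Nonempty) (hFne : F.Nonempty)
    (hEinf : E.Infinite) (hFinf : F.Infinite)
    (hdisj : Disjoint E F) :
    zoloTau n E F = 2 * Real.sqrt (zoloSigma n E F) / (1 + zoloSigma n E F) ∧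
    zoloSigma n E F =
      (zoloTau n E F / (1 + Real.sqrt (1 - (zoloTau n E F) ^ 2))) ^ 2 :=
  zolotarev_minimal_values_relation_general n E F hE hF hEne hdisj
end

section
/- Let n ≥ 0 and let E, F be disjoint nonempty compact subsets of ℂ. Suppose r* = p/q is a rational function of degree at most n with q nonvanishing on E ∪ F, min_{z∈F} |r*(z)| = 1, and sup_{z∈E} |r*(z)| = σ_n, where 0 < σ_n < 1, and let r̂(z) = ((1−σ_n)/(1+σ_n)) · (r*(z) − √σ_n)/(r*(z) + √σ_n) and τ_n = 2√σ_n/(1+σ_n). Then the set of extremal points M = {z ∈ E ∪ F : |r̂(z) − sign_{E/F}(z)| = τ_n} equals the union of M₁ = {z ∈ E : |r*(z)| = σ_n} and M₂ = {z ∈ F : |r*(z)| = 1}. -/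
open Polynomial Set

/-!
Writing `σ = s²`, the Möbius map `w ↦ ((1 - s²)/(1 + s²)) (w - s)/(w + s)` satisfies
`r̂ + 1 = (2/(1 + s²)) (w + s³)/(w + s)` and `r̂ - 1 = -(2/(1 + s²)) (s² w + s)/(w + s)`.
So `|r̂ ± 1| = 2s/(1 + s²)` says that `w` lies on an Apollonius circle, and expanding the
squared moduli identifies these circles as `|w| = s²` and `|w| = 1`. The theorem is this
computation applied pointwise to `w = r*(z)`.
-/

namespace Zolotarev

lemma normSq_add_cube_sub (s : ℝ) (w : ℂ) :
    Complex.normSq (w + ((s ^ 3 : ℝ) : ℂ)) - s ^ 2 * Complex.normSq (w + s) =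
      (1 - s ^ 2) * (Complex.normSq w - (s ^ 2) ^ 2) := by
  simp only [Complex.normSq_apply, Complex.add_re, Complex.add_im, Complex.ofReal_re,
    Complex.ofReal_im]
  ring

lemma normSq_sq_mul_add_sub (s : ℝ) (w : ℂ) :
    Complex.normSq (((s ^ 2 : ℝ) : ℂ) * w + s) - s ^ 2 * Complex.normSq (w + s) =
      s ^ 2 * (s ^ 2 - 1) * (Complex.normSq w - 1) := by
  simp only [Complex.normSq_apply, Complex.add_re, Complex.add_im, Complex.mul_re,
    Complex.mul_im, Complex.ofReal_re, Complex.ofReal_im]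
  ring

variable {s : ℝ} {w : ℂ}

lemma norm_eq_iff_normSq_eq {c : ℝ} (hc : 0 ≤ c) : ‖w‖ = c ↔ Complex.normSq w = c ^ 2 := by
  rw [← Complex.sq_norm, sq_eq_sq₀ (norm_nonneg w) hc]

lemma norm_ofReal_mul_div_eq_mul_iff {k t : ℝ} (hk : 0 < k) (ht : 0 ≤ t) {a b : ℂ}
    (hb : b ≠ 0) :
    ‖(k : ℂ) * (a / b)‖ = k * t ↔ Complex.normSq a - t ^ 2 * Complex.normSq b = 0 := by
  have hb' : 0 < ‖b‖ := norm_pos_iff.mpr hb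
  rw [norm_mul, Complex.norm_real, Real.norm_of_nonneg hk.le, mul_right_inj' hk.ne',
    norm_div, div_eq_iff hb'.ne', ← sq_eq_sq₀ (norm_nonneg a) (by positivity), mul_pow,
    Complex.sq_norm, Complex.sq_norm, sub_eq_zero]

lemma two_mul_div_one_add_sq_ne_one (hs : s ≠ 1) : 2 * s / (1 + s ^ 2) ≠ 1 := by
  rw [Ne, div_eq_one_iff_eq (by positivity)]
  intro h
  exact hs (by nlinarith [sq_nonneg (s - 1)])

noncomputable def signApprox (s : ℝ) (w : ℂ) : ℂ :=
  (((1 - s ^ 2) / (1 + s ^ 2) : ℝ) : ℂ) * (w - (s : ℂ)) / (w + (s : ℂ))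

lemma signApprox_of_add_eq_zero (hw : w + s = 0) : signApprox s w = 0 := by
  rw [signApprox, hw, div_zero]

lemma signApprox_add_one (hw : w + s ≠ 0) :
    signApprox s w + 1 = ((2 / (1 + s ^ 2) : ℝ) : ℂ) * ((w + ((s ^ 3 : ℝ) : ℂ)) / (w + s)) := by
  have hden : (1 : ℂ) + (s : ℂ) ^ 2 ≠ 0 := by exact_mod_cast (by positivity : (1 : ℝ) + s ^ 2 ≠ 0)
  unfold signApprox
  push_cast
  field_simp
  ring

lemma signApprox_sub_one (hw : w + s ≠ 0) :
    signApprox s w - 1 = -(((2 / (1 + s ^ 2) : ℝ) : ℂ) *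
      ((((s ^ 2 : ℝ) : ℂ) * w + (s : ℂ)) / (w + s))) := by
  have hden : (1 : ℂ) + (s : ℂ) ^ 2 ≠ 0 := by exact_mod_cast (by positivity : (1 : ℝ) + s ^ 2 ≠ 0)
  unfold signApprox
  push_cast
  field_simp
  ring

lemma norm_signApprox_add_one_eq_iff (hs0 : 0 < s) (hs1 : s < 1) :
    ‖signApprox s w + 1‖ = 2 * s / (1 + s ^ 2) ↔ ‖w‖ = s ^ 2 := by
  by_cases hw : w + s = 0
  · have hs2 : s ≠ s ^ 2 := by nlinarith
    rw [signApprox_of_add_eq_zero hw, zero_add, norm_one, eq_neg_of_add_eq_zero_left hw,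
      norm_neg, Complex.norm_real, Real.norm_of_nonneg hs0.le]
    exact iff_of_false (two_mul_div_one_add_sq_ne_one hs1.ne).symm hs2
  · rw [signApprox_add_one hw, mul_div_right_comm,
      norm_ofReal_mul_div_eq_mul_iff (by positivity) hs0.le hw, normSq_add_cube_sub, norm_eq_iff_normSq_eq (by positivity), mul_eq_zero,
      or_iff_right (by nlinarith), sub_eq_zero]

lemma norm_signApprox_sub_one_eq_iff (hs0 : 0 < s) (hs1 : s < 1) :
    ‖signApprox s w - 1‖ = 2 * s / (1 + s ^ 2) ↔ ‖w‖ = 1 := by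
  by_cases hw : w + s = 0
  · rw [signApprox_of_add_eq_zero hw, zero_sub, norm_neg, norm_one,
      eq_neg_of_add_eq_zero_left hw, norm_neg, Complex.norm_real, Real.norm_of_nonneg hs0.le]
    exact iff_of_false (two_mul_div_one_add_sq_ne_one hs1.ne).symm hs1.ne
  · rw [signApprox_sub_one hw, norm_neg, mul_div_right_comm,
      norm_ofReal_mul_div_eq_mul_iff (by positivity) hs0.le hw, normSq_sq_mul_add_sub,
      norm_eq_iff_normSq_eq zero_le_one, mul_eq_zero,
      or_iff_right (mul_neg_of_pos_of_neg (by positivity) (by nlinarith)).ne, sub_eq_zero,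
      one_pow]

end Zolotarev

open Zolotarev in
theorem zolotarev_extremal_sets_general (E F : Set ℂ)
    (hdisj : Disjoint E F)
    (r : ℂ → ℂ)
    (σ : ℝ)
    (hσ0 : 0 < σ) (hσ1 : σ < 1)
    (rhat : ℂ → ℂ)
    (hrhat : ∀ z, rhat z =
      (((1 - σ) / (1 + σ) : ℝ) : ℂ) * (r z - (Real.sqrt σ : ℂ)) / (r z + (Real.sqrt σ : ℂ)))
    (τ : ℝ) (hτ : τ = 2 * Real.sqrt σ / (1 + σ)) :
    {z ∈ E ∪ F | ‖rhat z - signEF E z‖ = τ} =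
      {z ∈ E | ‖r z‖ = σ} ∪ {z ∈ F | ‖r z‖ = 1} := by
  obtain ⟨s, hs0, rfl⟩ : ∃ s, 0 < s ∧ σ = s ^ 2 :=
    ⟨√σ, Real.sqrt_pos.mpr hσ0, (Real.sq_sqrt hσ0.le).symm⟩
  have hs1 : s < 1 := by nlinarith
  rw [Real.sqrt_sq hs0.le] at hrhat hτ
  have hrhat_eq : ∀ z, rhat z = signApprox s (r z) := hrhat
  ext z
  by_cases hzE : z ∈ E
  · have hzF : z ∉ F := hdisj.notMem_of_mem_left hzE
    simp [hzE, hzF, signEF, hrhat_eq, hτ, norm_signApprox_add_one_eq_iff hs0 hs1]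
  · simp [hzE, signEF, hrhat_eq, hτ, norm_signApprox_sub_one_eq_iff hs0 hs1]

/-- For a solution `r* = p/q` of the third Zolotarev problem with `0 < σ_n < 1`, and the
associated `r̂ = ((1-σ_n)/(1+σ_n))(r* - √σ_n)/(r* + √σ_n)` and `τ_n = 2√σ_n/(1+σ_n)`, the
set of extremal points `M = {z ∈ E ∪ F : |r̂(z) - sign_{E/F}(z)| = τ_n}` equals the union
of `M₁ = {z ∈ E : |r*(z)| = σ_n}` and `M₂ = {z ∈ F : |r*(z)| = 1}`. -/
theorem zolotarev_extremal_sets (n : ℕ) (E F : Set ℂ)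
    (hE : IsCompact E) (hF : IsCompact F)
    (hEne : E.Nonempty) (hFne : F.Nonempty)
    (hdisj : Disjoint E F)
    (p q : Polynomial ℂ) (hp : p.degree ≤ n) (hq : q.degree ≤ n)
    (hq0 : ∀ z ∈ E ∪ F, q.eval z ≠ 0)
    (r : ℂ → ℂ) (hr : ∀ z, r z = p.eval z / q.eval z)
    (hmin : IsLeast ((fun z => ‖r z‖) '' F) 1)
    (σ : ℝ) (hσ : σ = zoloSigma n E F)
    (hsup : sSup ((fun z => ‖r z‖) '' E) = σ)
    (hσ0 : 0 < σ) (hσ1 : σ < 1)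
    (rhat : ℂ → ℂ)
    (hrhat : ∀ z, rhat z =
      (((1 - σ) / (1 + σ) : ℝ) : ℂ) * (r z - (Real.sqrt σ : ℂ)) / (r z + (Real.sqrt σ : ℂ)))
    (τ : ℝ) (hτ : τ = 2 * Real.sqrt σ / (1 + σ)) :
    {z ∈ E ∪ F | ‖rhat z - signEF E z‖ = τ} =
      {z ∈ E | ‖r z‖ = σ} ∪ {z ∈ F | ‖r z‖ = 1} :=
  zolotarev_extremal_sets_general E F hdisj r σ hσ0 hσ1 rhat hrhat τ hτ
end

section
/- Let E be the closed disk of radius 1/2 centered at −1 and F the closed disk of radius 1/2 centered at +1 in ℂ. For every n ≥ 1, the minimal value of Problem Z3 is σ_n(E,F) = ((2 − √3)/(2 + √3))^n, and it is attained by (a scalar multiple of) r(z) = ((z + √3/2)/(z − √3/2))^n. -/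
/-!
The Möbius map `z ↦ (z + √3/2) / (z - √3/2)` sends the two disks onto `‖w‖ ≤ ρ` and `‖w‖ ≥ ρ⁻¹`,
`ρ = 2 - √3`, because their boundaries are Apollonius circles of the points `±√3/2`. It transplants
an admissible pair `p, q` with `t = sup_E ‖p / q‖` to polynomials `P, Q` of degree `≤ n` with
`‖P‖ ≤ t ‖Q‖` on `‖w‖ = ρ` and `‖Q‖ ≤ ‖P‖` on `‖w‖ = ρ⁻¹`. With the reflections
`P* = wⁿ P(1/w)` and `Q* = wⁿ Q(1/w)`, the polynomials `A = P Q*` and `B = Q P*` of degree `≤ 2n`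
satisfy `‖A‖ ≤ t ‖B‖` on the inner circle and `‖B‖ ≤ t ‖A‖` on the outer one. The maximum modulus
principle for `B` and the growth bound `max_{ρ⁻¹} ‖A‖ ≤ ρ^(-4n) max_ρ ‖A‖` then give
`t ≥ ρ^(2n) = ((2 - √3) / (2 + √3))ⁿ`, which `ρⁿ ((z + √3/2) / (z - √3/2))ⁿ` attains.
-/

open Polynomial Set

namespace Polynomial

theorem eval_reflect_of_ne_zero {K : Type*} [Field K] {N : ℕ} {f : K[X]} (hf : f.natDegree ≤ N)
    {x : K} (hx : x ≠ 0) : (f.reflect N).eval x = x ^ N * f.eval x⁻¹ := by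
  let _ := invertibleOfNonzero (inv_ne_zero hx)
  have h := eval₂_reflect_mul_pow (RingHom.id K) x⁻¹ N f hf
  rw [invOf_eq_inv, inv_inv, ← eval, ← eval, inv_pow] at h
  rw [← h, mul_comm, inv_mul_cancel_right₀ (pow_ne_zero N hx)]

theorem natDegree_reflect_le_of_le {R : Type*} [Semiring R] {N : ℕ} {f : R[X]}
    (hf : f.natDegree ≤ N) : (f.reflect N).natDegree ≤ N :=
  natDegree_reflect_le.trans (max_le le_rfl hf)

theorem natDegree_comp_le_of_le_one {R : Type*} [Semiring R] {n : ℕ} {p q : R[X]}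
    (hp : p.natDegree ≤ n) (hq : q.natDegree ≤ 1) : (p.comp q).natDegree ≤ n :=
  natDegree_comp_le.trans ((Nat.mul_le_mul hp hq).trans (mul_one n).le)

theorem norm_eval_le_of_forall_norm_eq (r : ℂ[X]) {R C : ℝ} (hR : 0 < R)
    (hb : ∀ w : ℂ, ‖w‖ = R → ‖r.eval w‖ ≤ C) {w : ℂ} (hw : ‖w‖ ≤ R) : ‖r.eval w‖ ≤ C := by
  refine Complex.norm_le_of_forall_mem_frontier_norm_le (Metric.isBounded_ball (x := 0) (r := R))
    r.differentiable.diffContOnCl (fun z hz => hb z ?_) ?_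
  · rwa [frontier_ball _ hR.ne', mem_sphere_zero_iff_norm] at hz
  · rwa [closure_ball _ hR.ne', mem_closedBall_zero_iff]

/-- Bernstein–Walsh for a circle: maximum modulus applied to the reflected polynomial. -/
theorem norm_eval_le_div_pow_mul {N : ℕ} {r : ℂ[X]} (hr : r.natDegree ≤ N) {ρ K : ℝ}
    (hρ : 0 < ρ) (hb : ∀ w : ℂ, ‖w‖ = ρ → ‖r.eval w‖ ≤ K) {v : ℂ} (hv : ρ ≤ ‖v‖) :
    ‖r.eval v‖ ≤ (‖v‖ / ρ) ^ N * K := by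
  have hv0 : v ≠ 0 := norm_pos_iff.mp (hρ.trans_le hv)
  have hrefl : ∀ u : ℂ, ‖u‖ = ρ⁻¹ → ‖(r.reflect N).eval u‖ ≤ ρ⁻¹ ^ N * K := by
    intro u hu
    have hu0 : u ≠ 0 := by rintro rfl; simp [hρ.ne] at hu
    rw [eval_reflect_of_ne_zero hr hu0, norm_mul, norm_pow, hu]
    exact mul_le_mul_of_nonneg_left (hb _ (by rw [norm_inv, hu, inv_inv])) (by positivity)
  have hle := norm_eval_le_of_forall_norm_eq _ (inv_pos.mpr hρ) hrefl
    (w := v⁻¹) (by rw [norm_inv]; exact inv_anti₀ hρ hv)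
  rw [eval_reflect_of_ne_zero hr (inv_ne_zero hv0), inv_inv, norm_mul, norm_pow, norm_inv] at hle
  have hvN : 0 < ‖v‖ ^ N := by positivity
  calc ‖r.eval v‖ = ‖v‖ ^ N * (‖v‖⁻¹ ^ N * ‖r.eval v‖) := by
        rw [inv_pow, ← mul_assoc, mul_inv_cancel₀ hvN.ne', one_mul]
    _ ≤ ‖v‖ ^ N * (ρ⁻¹ ^ N * K) := mul_le_mul_of_nonneg_left hle hvN.le
    _ = (‖v‖ / ρ) ^ N * K := by rw [div_pow, inv_pow]; ring

theorem pow_le_sq_of_norm_le_mul_on_circles {N : ℕ} {A B : ℂ[X]} (hA : A.natDegree ≤ N)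
    {ρ t : ℝ} (hρ : 0 < ρ) (hρ1 : ρ ≤ 1) (ht : 0 ≤ t)
    (hAB : ∀ w : ℂ, ‖w‖ = ρ → ‖A.eval w‖ ≤ t * ‖B.eval w‖)
    (hBA : ∀ w : ℂ, ‖w‖ = ρ⁻¹ → ‖B.eval w‖ ≤ t * ‖A.eval w‖)
    (hB : ∃ w : ℂ, ‖w‖ = ρ ∧ B.eval w ≠ 0) :
    ρ ^ (2 * N) ≤ t ^ 2 := by
  have hρσ : ρ ≤ ρ⁻¹ := hρ1.trans (one_le_inv₀ hρ |>.mpr hρ1)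
  obtain ⟨w₂, hw₂, hmax⟩ := (isCompact_sphere (0 : ℂ) ρ⁻¹).exists_isMaxOn
    (NormedSpace.sphere_nonempty.mpr (inv_pos.mpr hρ).le) B.continuous.norm.continuousOn
  rw [mem_sphere_zero_iff_norm] at hw₂
  set M := ‖B.eval w₂‖
  have hBM : ∀ w : ℂ, ‖w‖ ≤ ρ⁻¹ → ‖B.eval w‖ ≤ M :=
    fun w => norm_eval_le_of_forall_norm_eq B (inv_pos.mpr hρ)
      fun u hu => hmax (mem_sphere_zero_iff_norm.mpr hu)
  have hM : 0 < M := by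
    obtain ⟨w, hw, hBw⟩ := hB
    exact (norm_pos_iff.mpr hBw).trans_le (hBM w (hw.trans_le hρσ))
  have hAM : ‖A.eval w₂‖ ≤ (ρ⁻¹ / ρ) ^ N * (t * M) := hw₂ ▸
    norm_eval_le_div_pow_mul hA hρ
      (fun w hw => (hAB w hw).trans (mul_le_mul_of_nonneg_left (hBM w (hw.trans_le hρσ)) ht))
      (hw₂.symm ▸ hρσ)
  have hpow : (ρ⁻¹ / ρ) ^ N = (ρ ^ (2 * N))⁻¹ := by
    rw [div_eq_inv_mul, ← mul_inv, ← sq, inv_pow, ← pow_mul]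
  have hchain : 1 * M ≤ (t ^ 2 / ρ ^ (2 * N)) * M :=
    calc 1 * M ≤ t * ‖A.eval w₂‖ := (one_mul M).trans_le (hBA w₂ hw₂)
      _ ≤ t * ((ρ⁻¹ / ρ) ^ N * (t * M)) := mul_le_mul_of_nonneg_left hAM ht
      _ = (t ^ 2 / ρ ^ (2 * N)) * M := by rw [hpow]; ring
  exact (one_le_div (by positivity)).mp (le_of_mul_le_mul_right hchain hM)

theorem norm_eval_reflect_of_ne_zero {N : ℕ} {f : ℂ[X]} (hf : f.natDegree ≤ N) {w : ℂ}
    (hw : w ≠ 0) : ‖(f.reflect N).eval w‖ = ‖w‖ ^ N * ‖f.eval w⁻¹‖ := by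
  rw [eval_reflect_of_ne_zero hf hw, norm_mul, norm_pow]

theorem norm_eval_reflect_le_mul {N : ℕ} {f g : ℂ[X]} (hf : f.natDegree ≤ N)
    (hg : g.natDegree ≤ N) {r c : ℝ} (hr : 0 < r)
    (h : ∀ w : ℂ, ‖w‖ = r → ‖f.eval w‖ ≤ c * ‖g.eval w‖) {w : ℂ} (hw : ‖w‖ = r⁻¹) :
    ‖(f.reflect N).eval w‖ ≤ c * ‖(g.reflect N).eval w‖ := by
  have hw0 : w ≠ 0 := ne_zero_of_norm_ne_zero (hw ▸ (inv_pos.mpr hr).ne')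
  rw [norm_eval_reflect_of_ne_zero hf hw0, norm_eval_reflect_of_ne_zero hg hw0, mul_left_comm]
  exact mul_le_mul_of_nonneg_left (h _ (by rw [norm_inv, hw, inv_inv])) (by positivity)

theorem exists_norm_eq_eval_ne_zero (r : ℂ[X]) {R : ℝ} (hR : 0 < R) {w : ℂ} (hw : ‖w‖ ≤ R)
    (hrw : r.eval w ≠ 0) : ∃ u : ℂ, ‖u‖ = R ∧ r.eval u ≠ 0 := by
  by_contra! h
  exact hrw (norm_le_zero_iff.mp
    (norm_eval_le_of_forall_norm_eq r hR (fun u hu => by rw [h u hu, norm_zero]) hw))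

theorem pow_le_of_norm_le_mul_on_circles {n : ℕ} {P Q : ℂ[X]} (hP : P.natDegree ≤ n)
    (hQ : Q.natDegree ≤ n) {ρ t : ℝ} (hρ : 0 < ρ) (hρ1 : ρ ≤ 1)
    (hQ0 : ∀ w : ℂ, ‖w‖ = ρ → Q.eval w ≠ 0)
    (hin : ∀ w : ℂ, ‖w‖ = ρ → ‖P.eval w‖ ≤ t * ‖Q.eval w‖)
    (hout : ∀ w : ℂ, ‖w‖ = ρ⁻¹ → ‖Q.eval w‖ ≤ ‖P.eval w‖) :
    ρ ^ (2 * n) ≤ t := by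
  obtain ⟨w₀, hw₀⟩ := NormedSpace.sphere_nonempty (x := (0 : ℂ)).mpr hρ.le
  rw [mem_sphere_zero_iff_norm] at hw₀
  have hQw₀ : 0 < ‖Q.eval w₀‖ := norm_pos_iff.mpr (hQ0 w₀ hw₀)
  have ht : 0 ≤ t := nonneg_of_mul_nonneg_left ((norm_nonneg _).trans (hin w₀ hw₀)) hQw₀
  have hin' : ∀ w : ℂ, ‖w‖ = ρ⁻¹ → ‖(P.reflect n).eval w‖ ≤ t * ‖(Q.reflect n).eval w‖ :=
    fun w => norm_eval_reflect_le_mul hP hQ hρ hin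
  have hout' : ∀ w : ℂ, ‖w‖ = ρ → ‖(Q.reflect n).eval w‖ ≤ 1 * ‖(P.reflect n).eval w‖ :=
    fun w hw => norm_eval_reflect_le_mul hQ hP (inv_pos.mpr hρ)
      (fun u hu => (hout u hu).trans_eq (one_mul _).symm) (by rw [hw, inv_inv])
  have hB : ∃ w : ℂ, ‖w‖ = ρ ∧ (Q * P.reflect n).eval w ≠ 0 := by
    obtain ⟨u, hu, hQu⟩ := exists_norm_eq_eval_ne_zero Q (inv_pos.mpr hρ)
      (hw₀.trans_le (hρ1.trans ((one_le_inv₀ hρ).mpr hρ1))) (hQ0 w₀ hw₀)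
    have hu0 : u ≠ 0 := ne_zero_of_norm_ne_zero (hu ▸ (inv_pos.mpr hρ).ne')
    have hu' : ‖u⁻¹‖ = ρ := by rw [norm_inv, hu, inv_inv]
    have hPu : P.eval u ≠ 0 :=
      norm_pos_iff.mp ((norm_pos_iff.mpr hQu).trans_le (hout u hu))
    refine ⟨u⁻¹, hu', ?_⟩
    rw [eval_mul, eval_reflect_of_ne_zero hP (inv_ne_zero hu0), inv_inv]
    exact mul_ne_zero (hQ0 _ hu') (mul_ne_zero (pow_ne_zero _ (inv_ne_zero hu0)) hPu)
  have hdeg : (P * Q.reflect n).natDegree ≤ 2 * n :=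
    natDegree_mul_le.trans (by linarith [natDegree_reflect_le_of_le hQ (N := n)])
  have hsq := pow_le_sq_of_norm_le_mul_on_circles hdeg hρ hρ1 ht
    (fun w hw => by
      rw [eval_mul, eval_mul, norm_mul, norm_mul, ← mul_assoc]
      exact mul_le_mul (hin w hw) ((hout' w hw).trans_eq (one_mul _)) (norm_nonneg _)
        (by positivity))
    (fun w hw => by
      rw [eval_mul, eval_mul, norm_mul, norm_mul, mul_left_comm]
      exact mul_le_mul (hout w hw) (hin' w hw) (norm_nonneg _) (norm_nonneg _))
    hB
  rw [mul_comm 2 (2 * n), pow_mul] at hsq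
  exact (pow_le_pow_iff_left₀ (by positivity) ht two_ne_zero).mp hsq

end Polynomial

local notation "ρ" => (2 - Real.sqrt 3 : ℝ)
local notation "α" => ((Real.sqrt 3 / 2 : ℝ) : ℂ)

theorem sq_sqrt_three : Real.sqrt 3 ^ 2 = 3 := Real.sq_sqrt (by norm_num)

theorem two_sub_sqrt_three_pos : 0 < ρ := by nlinarith [sq_sqrt_three, Real.sqrt_nonneg 3]

theorem two_sub_sqrt_three_lt_one : ρ < 1 := by nlinarith [sq_sqrt_three, Real.sqrt_nonneg 3]

theorem two_sub_sqrt_three_inv : ρ⁻¹ = 2 + Real.sqrt 3 :=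
  inv_eq_of_mul_eq_one_right (by nlinarith [sq_sqrt_three])

theorem div_pow_eq_two_sub_sqrt_three_pow (n : ℕ) :
    ((2 - Real.sqrt 3) / (2 + Real.sqrt 3)) ^ n = ρ ^ (2 * n) := by
  rw [← two_sub_sqrt_three_inv, div_inv_eq_mul, ← sq, pow_mul]

theorem apollonius_identity (z : ℂ) :
    ρ ^ 2 * ‖z - α‖ ^ 2 - ‖z + α‖ ^ 2 = (4 * Real.sqrt 3 - 6) * (1 / 4 - ‖z + 1‖ ^ 2) := by
  simp only [Complex.sq_norm, Complex.normSq_apply, Complex.add_re, Complex.add_im,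
    Complex.sub_re, Complex.sub_im, Complex.ofReal_re, Complex.ofReal_im, Complex.one_re,
    Complex.one_im]
  linear_combination
    ((Real.sqrt 3) ^ 2 / 4 - Real.sqrt 3 * (z.re + 1) + z.re ^ 2 + z.im ^ 2 + 4 * z.re + 3 / 2)
      * sq_sqrt_three

theorem mem_closedBall_neg_one_iff_apollonius {z : ℂ} :
    z ∈ Metric.closedBall (-1 : ℂ) (1 / 2) ↔ ‖z + α‖ ≤ ρ * ‖z - α‖ := by
  have hc : 0 < 4 * Real.sqrt 3 - 6 := by nlinarith [sq_sqrt_three, Real.sqrt_nonneg 3]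
  have hid := apollonius_identity z
  rw [Metric.mem_closedBall, dist_eq_norm, sub_neg_eq_add,
    ← pow_le_pow_iff_left₀ (norm_nonneg _) (by norm_num) two_ne_zero,
    ← pow_le_pow_iff_left₀ (norm_nonneg _)
      (mul_nonneg two_sub_sqrt_three_pos.le (norm_nonneg _)) two_ne_zero, mul_pow]
  constructor <;> intro h <;> nlinarith

theorem mem_closedBall_one_iff_apollonius {z : ℂ} :
    z ∈ Metric.closedBall (1 : ℂ) (1 / 2) ↔ ‖z - α‖ ≤ ρ * ‖z + α‖ := by
  have h := mem_closedBall_neg_one_iff_apollonius (z := -z)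
  rwa [show -z + α = -(z - α) by ring, show -z - α = -(z + α) by ring, norm_neg, norm_neg,
    Metric.mem_closedBall, ← dist_neg_neg, neg_neg, neg_neg, ← Metric.mem_closedBall] at h

theorem sub_ne_zero_of_mem_closedBall_neg_one {z : ℂ}
    (hz : z ∈ Metric.closedBall (-1 : ℂ) (1 / 2)) : z - α ≠ 0 := by
  intro h
  rw [mem_closedBall_neg_one_iff_apollonius, h, norm_zero, mul_zero, norm_le_zero_iff,
    sub_eq_zero.mp h, ← two_mul] at hz
  have : Real.sqrt 3 ≠ 0 := by positivity
  simp_all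

/-- The inverse of the Möbius map `z ↦ (z + α) / (z - α)`. -/
noncomputable def moebiusInv (w : ℂ) : ℂ := α * (w + 1) / (w - 1)

theorem norm_moebiusInv_add {w : ℂ} (hw : w ≠ 1) :
    ‖moebiusInv w + α‖ = ‖w‖ * ‖moebiusInv w - α‖ := by
  have hw1 : w - 1 ≠ 0 := sub_ne_zero.mpr hw
  rw [← norm_mul]
  congr 1
  unfold moebiusInv
  field_simp
  ring

theorem moebiusInv_mem_closedBall_neg_one {w : ℂ} (hw : ‖w‖ = ρ) :
    moebiusInv w ∈ Metric.closedBall (-1 : ℂ) (1 / 2) := by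
  have hw1 : w ≠ 1 := by rintro rfl; rw [norm_one] at hw; linarith [two_sub_sqrt_three_lt_one]
  rw [mem_closedBall_neg_one_iff_apollonius, norm_moebiusInv_add hw1, hw]

theorem moebiusInv_mem_closedBall_one {w : ℂ} (hw : ‖w‖ = ρ⁻¹) :
    moebiusInv w ∈ Metric.closedBall (1 : ℂ) (1 / 2) := by
  have hw1 : w ≠ 1 := by
    rintro rfl
    rw [norm_one, eq_comm, inv_eq_one] at hw
    linarith [two_sub_sqrt_three_lt_one]
  rw [mem_closedBall_one_iff_apollonius, norm_moebiusInv_add hw1, hw, ← mul_assoc,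
    mul_inv_cancel₀ two_sub_sqrt_three_pos.ne', one_mul]

noncomputable def moebiusTransplant (n : ℕ) (p : ℂ[X]) : ℂ[X] :=
  ((p.comp (C α + C (2 * α) * X)).reflect n).comp (X - 1)

theorem natDegree_moebiusTransplant_le {n : ℕ} {p : ℂ[X]} (hp : p.natDegree ≤ n) :
    (moebiusTransplant n p).natDegree ≤ n :=
  natDegree_comp_le_of_le_one (natDegree_reflect_le_of_le (natDegree_comp_le_of_le_one hp
    (by compute_degree))) (by compute_degree)

theorem eval_moebiusTransplant {n : ℕ} {p : ℂ[X]} (hp : p.natDegree ≤ n) {w : ℂ} (hw : w ≠ 1) :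
    (moebiusTransplant n p).eval w = (w - 1) ^ n * p.eval (moebiusInv w) := by
  have hw1 : w - 1 ≠ 0 := sub_ne_zero.mpr hw
  rw [moebiusTransplant, eval_comp, eval_sub, eval_X, eval_one, eval_reflect_of_ne_zero _ hw1,
    eval_comp]
  · congr 2
    simp only [eval_add, eval_C, eval_mul, eval_X, moebiusInv]
    field_simp
    ring
  · exact natDegree_comp_le_of_le_one hp (by compute_degree)

theorem two_sub_sqrt_three_pow_le_sSup {n : ℕ} {p q : ℂ[X]} (hp : p.natDegree ≤ n)
    (hq : q.natDegree ≤ n) (hqE : ∀ z ∈ Metric.closedBall (-1 : ℂ) (1 / 2), q.eval z ≠ 0)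
    (hpqF : ∀ z ∈ Metric.closedBall (1 : ℂ) (1 / 2), ‖q.eval z‖ ≤ ‖p.eval z‖) :
    ρ ^ (2 * n) ≤
      sSup ((fun z => ‖p.eval z / q.eval z‖) '' Metric.closedBall (-1 : ℂ) (1 / 2)) := by
  set s := sSup ((fun z => ‖p.eval z / q.eval z‖) '' Metric.closedBall (-1 : ℂ) (1 / 2))
  have hbdd : BddAbove ((fun z => ‖p.eval z / q.eval z‖) '' Metric.closedBall (-1 : ℂ) (1 / 2)) :=
    (isCompact_closedBall _ _).bddAbove_image
      (p.continuous.continuousOn.div q.continuous.continuousOn hqE).norm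
  have hpqE : ∀ z ∈ Metric.closedBall (-1 : ℂ) (1 / 2), ‖p.eval z‖ ≤ s * ‖q.eval z‖ := by
    intro z hz
    have h : ‖p.eval z / q.eval z‖ ≤ s := le_csSup hbdd ⟨z, hz, rfl⟩
    rwa [norm_div, div_le_iff₀ (norm_pos_iff.mpr (hqE z hz))] at h
  have hne : ∀ {w : ℂ} {r : ℝ}, r ≠ 1 → ‖w‖ = r → w ≠ 1 := by
    rintro w r hr hw rfl
    exact hr (by simpa using hw.symm)
  have hρ1 : ρ ≠ 1 := two_sub_sqrt_three_lt_one.ne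
  have hσ1 : ρ⁻¹ ≠ 1 := by rwa [Ne, inv_eq_one]
  refine pow_le_of_norm_le_mul_on_circles (natDegree_moebiusTransplant_le hp)
    (natDegree_moebiusTransplant_le hq) two_sub_sqrt_three_pos two_sub_sqrt_three_lt_one.le
    (fun w hw => ?_) (fun w hw => ?_) (fun w hw => ?_)
  · rw [eval_moebiusTransplant hq (hne hρ1 hw)]
    exact mul_ne_zero (pow_ne_zero _ (sub_ne_zero.mpr (hne hρ1 hw)))
      (hqE _ (moebiusInv_mem_closedBall_neg_one hw))
  · rw [eval_moebiusTransplant hp (hne hρ1 hw), eval_moebiusTransplant hq (hne hρ1 hw),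
      norm_mul, norm_mul, mul_left_comm]
    exact mul_le_mul_of_nonneg_left (hpqE _ (moebiusInv_mem_closedBall_neg_one hw))
      (norm_nonneg _)
  · rw [eval_moebiusTransplant hp (hne hσ1 hw), eval_moebiusTransplant hq (hne hσ1 hw),
      norm_mul, norm_mul]
    exact mul_le_mul_of_nonneg_left (hpqF _ (moebiusInv_mem_closedBall_one hw)) (norm_nonneg _)

noncomputable def extremalNum (n : ℕ) : ℂ[X] := C ((ρ : ℂ) ^ n) * (X + C α) ^ n

noncomputable def extremalDen (n : ℕ) : ℂ[X] := (X - C α) ^ n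

theorem degree_extremalNum_le (n : ℕ) : (extremalNum n).degree ≤ n := by
  unfold extremalNum; compute_degree!

theorem degree_extremalDen_le (n : ℕ) : (extremalDen n).degree ≤ n := by
  unfold extremalDen; compute_degree!

theorem norm_eval_extremalNum (n : ℕ) (z : ℂ) :
    ‖(extremalNum n).eval z‖ = (ρ * ‖z + α‖) ^ n := by
  rw [extremalNum, eval_mul, eval_C, eval_pow, eval_add, eval_X, eval_C, norm_mul, norm_pow,
    norm_pow, Complex.norm_real, Real.norm_of_nonneg two_sub_sqrt_three_pos.le, mul_pow]

theorem norm_eval_extremalDen (n : ℕ) (z : ℂ) : ‖(extremalDen n).eval z‖ = ‖z - α‖ ^ n := by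
  rw [extremalDen, eval_pow, eval_sub, eval_X, eval_C, norm_pow]

theorem eval_extremalDen_ne_zero (n : ℕ) {z : ℂ} (hz : z ∈ Metric.closedBall (-1 : ℂ) (1 / 2)) :
    (extremalDen n).eval z ≠ 0 := by
  rw [extremalDen, eval_pow, eval_sub, eval_X, eval_C]
  exact pow_ne_zero n (sub_ne_zero_of_mem_closedBall_neg_one hz)

theorem norm_eval_extremalDen_le (n : ℕ) {z : ℂ} (hz : z ∈ Metric.closedBall (1 : ℂ) (1 / 2)) :
    ‖(extremalDen n).eval z‖ ≤ ‖(extremalNum n).eval z‖ := by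
  rw [norm_eval_extremalNum, norm_eval_extremalDen]
  exact pow_le_pow_left₀ (norm_nonneg _) (mem_closedBall_one_iff_apollonius.mp hz) n

theorem extremalNum_div_extremalDen (n : ℕ) (z : ℂ) :
    (extremalNum n).eval z / (extremalDen n).eval z = (ρ : ℂ) ^ n * ((z + α) / (z - α)) ^ n := by
  rw [extremalNum, extremalDen, eval_mul, eval_C, eval_pow, eval_pow, eval_add, eval_sub, eval_X,
    eval_C, mul_div_assoc, div_pow]

theorem sSup_norm_extremalNum_div (n : ℕ) :
    sSup ((fun z => ‖(extremalNum n).eval z / (extremalDen n).eval z‖) ''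
      Metric.closedBall (-1 : ℂ) (1 / 2)) = ρ ^ (2 * n) := by
  have hnorm : ∀ z, ‖(extremalNum n).eval z / (extremalDen n).eval z‖ =
      (ρ * (‖z + α‖ / ‖z - α‖)) ^ n := fun z => by
    rw [norm_div, norm_eval_extremalNum, norm_eval_extremalDen, ← div_pow, mul_div_assoc]
  have hρρ : (ρ * ρ) ^ n = ρ ^ (2 * n) := by rw [← sq, ← pow_mul]
  have hmem : (-1 / 2 : ℂ) ∈ Metric.closedBall (-1 : ℂ) (1 / 2) := by
    rw [Metric.mem_closedBall, dist_eq_norm]; norm_num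
  refine IsGreatest.csSup_eq ⟨⟨-1 / 2, hmem, ?_⟩, ?_⟩
  · have hid := apollonius_identity (-1 / 2)
    have hsq : ‖(-1 / 2 : ℂ) + α‖ ^ 2 = (ρ * ‖(-1 / 2 : ℂ) - α‖) ^ 2 := by
      norm_num at hid ⊢
      linarith
    have heq := (pow_left_inj₀ (norm_nonneg _)
      (mul_nonneg two_sub_sqrt_three_pos.le (norm_nonneg _)) two_ne_zero).mp hsq
    dsimp only
    rw [hnorm, (div_eq_iff (norm_ne_zero_iff.mpr (sub_ne_zero_of_mem_closedBall_neg_one hmem))).mpr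
      heq, hρρ]
  · rintro _ ⟨z, hz, rfl⟩
    dsimp only
    rw [hnorm, ← hρρ]
    have hρ := two_sub_sqrt_three_pos
    refine pow_le_pow_left₀ (by positivity) (mul_le_mul_of_nonneg_left ?_ hρ.le) n
    exact (div_le_iff₀ (norm_pos_iff.mpr (sub_ne_zero_of_mem_closedBall_neg_one hz))).mpr
      (mem_closedBall_neg_one_iff_apollonius.mp hz)

theorem zoloSigma_two_disks_general (n : ℕ)
    (E F : Set ℂ)
    (hE : E = Metric.closedBall (-1 : ℂ) (1 / 2))
    (hF : F = Metric.closedBall (1 : ℂ) (1 / 2)) :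
    zoloSigma n E F = ((2 - Real.sqrt 3) / (2 + Real.sqrt 3)) ^ n ∧
    ∃ (c : ℂ) (p q : Polynomial ℂ), c ≠ 0 ∧
      p.degree ≤ n ∧ q.degree ≤ n ∧
      (∀ z ∈ E, q.eval z ≠ 0) ∧ (∀ z ∈ F, ‖q.eval z‖ ≤ ‖p.eval z‖) ∧
      (∀ z : ℂ, z ≠ (Real.sqrt 3 / 2 : ℝ) → p.eval z / q.eval z =
        c * ((z + (Real.sqrt 3 / 2 : ℝ)) / (z - (Real.sqrt 3 / 2 : ℝ))) ^ n) ∧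
      sSup ((fun z => ‖p.eval z / q.eval z‖) '' E) =
        ((2 - Real.sqrt 3) / (2 + Real.sqrt 3)) ^ n := by
  subst hE hF
  rw [div_pow_eq_two_sub_sqrt_three_pow]
  have hext := sSup_norm_extremalNum_div n
  refine ⟨IsLeast.csInf_eq ⟨⟨extremalNum n, extremalDen n, degree_extremalNum_le n,
    degree_extremalDen_le n, fun z => eval_extremalDen_ne_zero n,
    fun z => norm_eval_extremalDen_le n, hext.symm⟩, ?_⟩,
    (ρ : ℂ) ^ n, extremalNum n, extremalDen n,
    pow_ne_zero n (Complex.ofReal_ne_zero.mpr two_sub_sqrt_three_pos.ne'),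
    degree_extremalNum_le n, degree_extremalDen_le n, fun z => eval_extremalDen_ne_zero n,
    fun z => norm_eval_extremalDen_le n, fun z _ => extremalNum_div_extremalDen n z, hext⟩
  rintro _ ⟨p, q, hp, hq, hqE, hpqF, rfl⟩
  exact two_sub_sqrt_three_pow_le_sSup (natDegree_le_iff_degree_le.mpr hp)
    (natDegree_le_iff_degree_le.mpr hq) hqE hpqF

/-- For `E` and `F` the closed disks of radius `1/2` centered at `-1` and `+1`, the minimal
value of the third Zolotarev problem is `σ_n = ((2-√3)/(2+√3))ⁿ`, attained by a scalar
multiple of `r(z) = ((z + √3/2)/(z - √3/2))ⁿ`. -/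
theorem zoloSigma_two_disks (n : ℕ) (hn : 1 ≤ n)
    (E F : Set ℂ)
    (hE : E = Metric.closedBall (-1 : ℂ) (1 / 2))
    (hF : F = Metric.closedBall (1 : ℂ) (1 / 2)) :
    zoloSigma n E F = ((2 - Real.sqrt 3) / (2 + Real.sqrt 3)) ^ n ∧
    ∃ (c : ℂ) (p q : Polynomial ℂ), c ≠ 0 ∧
      p.degree ≤ n ∧ q.degree ≤ n ∧
      (∀ z ∈ E, q.eval z ≠ 0) ∧ (∀ z ∈ F, ‖q.eval z‖ ≤ ‖p.eval z‖) ∧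
      (∀ z : ℂ, z ≠ (Real.sqrt 3 / 2 : ℝ) → p.eval z / q.eval z =
        c * ((z + (Real.sqrt 3 / 2 : ℝ)) / (z - (Real.sqrt 3 / 2 : ℝ))) ^ n) ∧
      sSup ((fun z => ‖p.eval z / q.eval z‖) '' E) =
        ((2 - Real.sqrt 3) / (2 + Real.sqrt 3)) ^ n :=
  zoloSigma_two_disks_general n E F hE hF
end

section
/- Let a = 79/40 + √((79/40)² − 1). Then a > 1, the pair {a, 1/a} are inverse points with respect to both the unit circle and the circle |z − 1/5| = 1/2 (i.e., a·(1/a) = 1 and (a − 1/5)·(1/a − 1/5) = 1/4), and the Möbius transformation m(z) = (z − 1/a)/(z − a) satisfies |m(z)| = 1/a for every z with |z| = 1 and |m(z)| = 1/(2(a − 1/5)) for every z with |z − 1/5| = 1/2. -/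
/-!
Real points `p, q` with `(p - c)(q - c) = r²` are inverse with respect to the circle
`|z - c| = r`, and for `z` on that circle `|z - q| = r/|p - c| · |z - p|` (expand both squared
moduli using `|z - c|² = r²`). Here `a + 1/a = 79/20`, which makes `{a, 1/a}` inverse with respect
to both circles, so `m` has constant modulus on each of them.
-/

open Complex

theorem norm_sub_mul_abs_eq_of_inverse_points {z : ℂ} {c p q r : ℝ} (hr : 0 ≤ r)
    (hpq : (p - c) * (q - c) = r ^ 2) (hz : ‖z - c‖ = r) :
    ‖z - q‖ * |p - c| = r * ‖z - p‖ := by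
  have normSq_sub_ofReal (u : ℝ) : ‖z - u‖ ^ 2 = (z.re - u) ^ 2 + z.im ^ 2 := by
    rw [Complex.sq_norm, normSq_apply]
    simp only [sub_re, ofReal_re, sub_im, ofReal_im, sub_zero]
    ring
  have hcircle : (z.re - c) ^ 2 + z.im ^ 2 = r ^ 2 := by rw [← normSq_sub_ofReal, hz]
  refine (sq_eq_sq₀ (by positivity) (by positivity)).mp ?_
  rw [mul_pow, mul_pow, sq_abs, normSq_sub_ofReal, normSq_sub_ofReal]
  linear_combination ((p - c) ^ 2 - r ^ 2) * hcircle
    + ((p - c) * (q - c) + r ^ 2 - 2 * (z.re - c) * (p - c)) * hpq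

theorem norm_div_sub_eq_of_inverse_points {z : ℂ} {c p q r : ℝ} (hr : 0 ≤ r)
    (hp : |p - c| ≠ r) (hpq : (p - c) * (q - c) = r ^ 2) (hz : ‖z - c‖ = r) :
    ‖(z - q) / (z - p)‖ = r / |p - c| := by
  have hzp : z ≠ p := by
    rintro rfl
    exact hp (by rwa [← ofReal_sub, norm_real, Real.norm_eq_abs] at hz)
  have hpc : |p - c| ≠ 0 := by
    rintro h
    rw [abs_eq_zero, sub_eq_zero] at h
    subst h
    simp only [sub_self, zero_mul, eq_comm, pow_eq_zero_iff two_ne_zero] at hpq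
    simp [hpq] at hp
  rw [norm_div, div_eq_div_iff (norm_ne_zero_iff.mpr (sub_ne_zero.mpr hzp)) hpc]
  exact norm_sub_mul_abs_eq_of_inverse_points hr hpq hz

theorem one_lt_add_sqrt_sq_sub_one {t : ℝ} (ht : 1 < t) : 1 < t + √(t ^ 2 - 1) := by
  linarith [Real.sqrt_nonneg (t ^ 2 - 1)]

theorem add_inv_add_sqrt_sq_sub_one {t : ℝ} (ht : 1 ≤ t) :
    (t + √(t ^ 2 - 1)) + 1 / (t + √(t ^ 2 - 1)) = 2 * t := by
  have hs : √(t ^ 2 - 1) ^ 2 = t ^ 2 - 1 := Real.sq_sqrt (by nlinarith)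
  have hpos : 0 < t + √(t ^ 2 - 1) := by positivity
  field_simp
  linear_combination hs

/-- With `a = 79/40 + √((79/40)² - 1)`, the pair `{a, 1/a}` are common inverse points of
the unit circle and of the circle `|z - 1/5| = 1/2`, and the Möbius transformation
`m(z) = (z - 1/a)/(z - a)` has constant modulus `1/a` on the unit circle and constant
modulus `1/(2(a - 1/5))` on the circle `|z - 1/5| = 1/2`. -/
theorem mobius_disk_in_disk (a : ℝ)
    (ha : a = 79 / 40 + Real.sqrt ((79 / 40) ^ 2 - 1))
    (m : ℂ → ℂ)
    (hm : ∀ z, m z = (z - (1 / a : ℝ)) / (z - (a : ℝ))) :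
    1 < a ∧
    a * (1 / a) = 1 ∧
    (a - 1 / 5) * (1 / a - 1 / 5) = 1 / 4 ∧
    (∀ z : ℂ, ‖z‖ = 1 → ‖m z‖ = 1 / a) ∧
    (∀ z : ℂ, ‖z - (1 / 5 : ℝ)‖ = 1 / 2 → ‖m z‖ = 1 / (2 * (a - 1 / 5))) := by
  have ha1 : 1 < a := ha ▸ one_lt_add_sqrt_sq_sub_one (by norm_num)
  have hsum : a + 1 / a = 79 / 20 := by
    rw [ha, add_inv_add_sqrt_sq_sub_one (by norm_num)]; norm_num
  have hunit : a * (1 / a) = 1 := mul_one_div_cancel (by positivity)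
  have hsmall : (a - 1 / 5) * (1 / a - 1 / 5) = 1 / 4 := by
    linear_combination hunit - hsum / 5
  refine ⟨ha1, hunit, hsmall, fun z hz => ?_, fun z hz => ?_⟩
  · rw [hm, norm_div_sub_eq_of_inverse_points (c := 0) zero_le_one
      (by rw [sub_zero, abs_of_pos (by linarith)]; exact ha1.ne')
      (by simpa using hunit) (by simpa using hz), sub_zero, abs_of_pos (by linarith)]
  · rw [hm, norm_div_sub_eq_of_inverse_points (by norm_num)
      (by rw [abs_of_pos (by linarith)]; linarith)
      (by rw [hsmall]; norm_num) hz, abs_of_pos (by linarith), div_div]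
end

section
/- Let A be an m×m complex matrix and B an n×n complex matrix whose spectra are disjoint. Then for every m×n complex matrix Y the Sylvester equation A X − X B = Y has a unique m×n solution X; equivalently, the linear map X ↦ A X − X B on m×n complex matrices is bijective. -/
/-!
If `A X = X B`, then `p(A) X = X p(B)` for every polynomial `p`. Taking for `p` the characteristic
polynomial of `B` gives `p(A) X = 0` by Cayley–Hamilton, while `p(A) = ∏ (A - μ)` over the
eigenvalues `μ` of `B` is invertible because none of them is an eigenvalue of `A`. Hence the
Sylvester operator `X ↦ A X - X B` is injective, and so bijective by finite-dimensionality.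
-/

open Polynomial

theorem spectrum.isUnit_aeval_of_monic {𝕜 R : Type*} [Field 𝕜] [IsAlgClosed 𝕜] [Ring R]
    [Algebra 𝕜 R] {a : R} {p : 𝕜[X]} (hp : p.Monic) (h : ∀ μ ∈ spectrum 𝕜 a, ¬p.IsRoot μ) :
    IsUnit (aeval a p) := by
  by_contra hnu
  rw [(IsAlgClosed.splits p).eq_prod_roots_of_monic hp] at hnu
  obtain ⟨μ, hμ, hroot⟩ := spectrum.exists_mem_of_not_isUnit_aeval_prod hnu
  exact h μ hμ hroot

namespace Matrix

variable {m n K : Type*} [Fintype m] [DecidableEq m] [Fintype n] [DecidableEq n]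

theorem aeval_mul_eq_mul_aeval [CommSemiring K] {A : Matrix m m K} {B : Matrix n n K}
    {X : Matrix m n K} (h : A * X = X * B) (p : K[X]) :
    aeval A p * X = X * aeval B p := by
  induction p using Polynomial.induction_on with
  | C c => simp [Algebra.algebraMap_eq_smul_one]
  | add p q hp hq => simp only [map_add, Matrix.add_mul, Matrix.mul_add, hp, hq]
  | monomial k c ih =>
    rw [pow_succ, ← mul_assoc, map_mul (aeval A) _ Polynomial.X, map_mul (aeval B) _ Polynomial.X,
      aeval_X, aeval_X, Matrix.mul_assoc, h, ← Matrix.mul_assoc, ih, Matrix.mul_assoc]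

variable [Field K] [IsAlgClosed K]

theorem eq_zero_of_mul_eq_mul_of_disjoint_spectrum {A : Matrix m m K} {B : Matrix n n K}
    {X : Matrix m n K} (hAB : Disjoint (spectrum K A) (spectrum K B)) (h : A * X = X * B) :
    X = 0 := by
  have hunit : IsUnit (aeval A B.charpoly) :=
    spectrum.isUnit_aeval_of_monic B.charpoly_monic fun μ hμA hroot =>
      Set.disjoint_left.mp hAB hμA (mem_spectrum_of_isRoot_charpoly hroot)
  have hkill : aeval A B.charpoly * X = 0 := by
    rw [aeval_mul_eq_mul_aeval h, aeval_self_charpoly, Matrix.mul_zero]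
  simpa [hkill] using
    (nonsing_inv_mul_cancel_left _ X ((isUnit_iff_isUnit_det _).mp hunit)).symm

variable (K) in
def sylvesterMap (A : Matrix m m K) (B : Matrix n n K) : Matrix m n K →ₗ[K] Matrix m n K :=
  mulLeftLinearMap n K A - mulRightLinearMap m K B

theorem sylvesterMap_bijective {A : Matrix m m K} {B : Matrix n n K}
    (hAB : Disjoint (spectrum K A) (spectrum K B)) : Function.Bijective (sylvesterMap K A B) := by
  have hinj : Function.Injective (sylvesterMap K A B) := by
    refine (injective_iff_map_eq_zero _).mpr fun X hX => ?_
    exact eq_zero_of_mul_eq_mul_of_disjoint_spectrum hAB (sub_eq_zero.mp hX)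
  exact ⟨hinj, LinearMap.injective_iff_surjective.mp hinj⟩

end Matrix

/-- If the spectra of the square complex matrices `A` (of size `m`) and `B` (of size `n`)
are disjoint, then for every `m × n` matrix `Y` the Sylvester equation `A X - X B = Y`
has a unique solution `X`; equivalently, the linear map `X ↦ A X - X B` is bijective. -/
theorem sylvester_equation_unique_solution (m n : ℕ)
    (A : Matrix (Fin m) (Fin m) ℂ) (B : Matrix (Fin n) (Fin n) ℂ)
    (hdisj : Disjoint (spectrum ℂ A) (spectrum ℂ B)) :
    (∀ Y : Matrix (Fin m) (Fin n) ℂ, ∃! X : Matrix (Fin m) (Fin n) ℂ, A * X - X * B = Y) ∧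
    Function.Bijective (fun X : Matrix (Fin m) (Fin n) ℂ => A * X - X * B) := by
  have hbij : Function.Bijective (Matrix.sylvesterMap ℂ A B) :=
    Matrix.sylvesterMap_bijective hdisj
  exact ⟨hbij.existsUnique, hbij⟩
end
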